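/- arXiv:2102.01426 — 2 statements merged into one kernel-verified Lean document; each statement's English description precedes it below -/
import Mathlib

section
/- For any variety V of algebras over an algebraic first-order language L, the following are equivalent: (1) V is coherent; (2) V has the equational variable projection property; (3) V has the variable projection property. -/
namespace Paper

open FirstOrder FirstOrder.Language FirstOrder.Language.Structure

universe u

/-- A bundled algebra: an `L`-structure with carrier in `Type u`. -/
structure Alg (L : FirstOrder.Language.{u, u}) : Type (u + 1) where
  carrier : Type u
  [str : L.Structure carrier]

attribute [instance] Alg.str

variable {L : FirstOrder.Language.{u, u}}

/-- The direct product of a family of `L`-structures. -/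
instance piStructure {ι : Type u} (M : ι → Type u) [∀ i, L.Structure (M i)] :
    L.Structure (∀ i, M i) where
  funMap f x i := funMap f fun j => x j i
  RelMap r x := ∀ i, RelMap r fun j => x j i

/-- An equation `s ≈ t` holds in `M` under the assignment `v`. -/
def EqHolds {α : Type} {M : Type u} [L.Structure M]
    (ε : L.Term α × L.Term α) (v : α → M) : Prop :=
  ε.1.realize v = ε.2.realize v

/-- A (finite) conjunction of equations holds under the assignment `v`. -/
def ConjHolds {α : Type} {M : Type u} [L.Structure M]
    (c : List (L.Term α × L.Term α)) (v : α → M) : Prop :=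
  ∀ ε ∈ c, EqHolds ε v

/-- A (finite) conjunction of negated equations holds under the assignment `v`. -/
def NegConjHolds {α : Type} {M : Type u} [L.Structure M]
    (c : List (L.Term α × L.Term α)) (v : α → M) : Prop :=
  ∀ ε ∈ c, ¬ EqHolds ε v

/-- The first-order theory of a class of algebras. -/
def theoryOf (K : Set (Alg L)) : L.Theory :=
  {φ | ∀ A ∈ K, A.carrier ⊨ φ}

/-- A sentence is universal if it is the universal closure of a quantifier-free formula. -/
def IsUniversalSentence (φ : L.Sentence) : Prop :=
  ∃ (n : ℕ) (ψ : L.BoundedFormula Empty n), ψ.IsQF ∧ φ = ψ.alls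

/-- Semantic entailment of a sentence from a theory. -/
def Entails (T : L.Theory) (φ : L.Sentence) : Prop :=
  ∀ (M : Type u) [L.Structure M] [Nonempty M], M ⊨ T → M ⊨ φ

/-- Two theories are co-theories when they entail the same universal sentences. -/
def AreCotheories (T T' : L.Theory) : Prop :=
  ∀ φ : L.Sentence, IsUniversalSentence φ → (Entails T φ ↔ Entails T' φ)

/-- A theory is model complete when every embedding between its models is elementary. -/
def IsModelComplete (T : L.Theory) : Prop :=
  ∀ (M N : Type u) [L.Structure M] [L.Structure N] [Nonempty M] [Nonempty N],
    M ⊨ T → N ⊨ T → ∀ (f : M ↪[L] N) (n : ℕ) (φ : L.Formula (Fin n)) (v : Fin n → M),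
      φ.Realize (f ∘ v) ↔ φ.Realize v

/-- `T'` is a model companion of `T`. -/
def IsModelCompanion (T T' : L.Theory) : Prop :=
  IsModelComplete T' ∧ AreCotheories T T'

/-- The (quantifier-free) diagram of a structure: all quantifier-free sentences with
parameters from `M` that hold in `M`. -/
def diagram (L : FirstOrder.Language.{u, u}) (M : Type u) [L.Structure M] :
    (L[[M]]).Theory :=
  {φ | BoundedFormula.IsQF φ ∧ M ⊨ φ}

/-- `T'` is a model completion of `T`: a model companion such that, for every model `M` of `T`,
`T'` together with the diagram of `M` is complete. -/
def IsModelCompletion (T T' : L.Theory) : Prop :=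
  IsModelCompanion T T' ∧
    ∀ (M : Type u) [L.Structure M] [Nonempty M], M ⊨ T →
      Theory.IsComplete ((L.lhomWithConstants M).onTheory T' ∪ diagram L M)

/-- The theory of the class `K` has a model completion. -/
def HasModelCompletion (K : Set (Alg L)) : Prop :=
  ∃ T' : L.Theory, IsModelCompletion (theoryOf K) T'

/-- `K` is a universal class: it is closed under isomorphisms, substructures and ultraproducts. -/
def IsUniversalClass (K : Set (Alg L)) : Prop :=
  (∀ A ∈ K, ∀ (N : Type u) [L.Structure N], Nonempty (A.carrier ≃[L] N) → Alg.mk N ∈ K) ∧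
  (∀ A ∈ K, ∀ S : L.Substructure A.carrier, Alg.mk (↥S) ∈ K) ∧
  (∀ (ι : Type u) (F : Ultrafilter ι) (M : ι → Type u) [∀ i, L.Structure (M i)],
      (∀ i, Alg.mk (M i) ∈ K) → Alg.mk ((F : Filter ι).Product M) ∈ K)

/-- `K` is a variety: it is closed under homomorphic images, substructures and products. -/
def IsVariety (K : Set (Alg L)) : Prop :=
  (∀ A ∈ K, ∀ (N : Type u) [L.Structure N] (f : A.carrier →[L] N),
      Function.Surjective ⇑f → Alg.mk N ∈ K) ∧
  (∀ A ∈ K, ∀ S : L.Substructure A.carrier, Alg.mk (↥S) ∈ K) ∧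
  (∀ (ι : Type u) (M : ι → Type u) [∀ i, L.Structure (M i)],
      (∀ i, Alg.mk (M i) ∈ K) → Alg.mk (∀ i, M i) ∈ K)

/-- The amalgamation property. -/
def Amalgamation (K : Set (Alg L)) : Prop :=
  ∀ A ∈ K, ∀ B ∈ K, ∀ C ∈ K,
    ∀ (f : A.carrier ↪[L] B.carrier) (g : A.carrier ↪[L] C.carrier),
      ∃ D ∈ K, ∃ (h : B.carrier ↪[L] D.carrier) (k : C.carrier ↪[L] D.carrier),
        ∀ a : A.carrier, h (f a) = k (g a)

/-- The variable projection property. -/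
def VarProj (K : Set (Alg L)) : Prop :=
  ∀ (n : ℕ) (φ : List (L.Term (Fin n ⊕ Unit) × L.Term (Fin n ⊕ Unit))),
    ∃ ξ : L.Formula (Fin n), ξ.IsQF ∧
      (∀ A ∈ K, ∀ v : Fin n ⊕ Unit → A.carrier, ConjHolds φ v → ξ.Realize (v ∘ Sum.inl)) ∧
      (∀ ε : L.Term (Fin n) × L.Term (Fin n),
        (∀ A ∈ K, ∀ v : Fin n ⊕ Unit → A.carrier, ConjHolds φ v → EqHolds ε (v ∘ Sum.inl)) →
        (∀ A ∈ K, ∀ v : Fin n → A.carrier, ξ.Realize v → EqHolds ε v))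

/-- The equational variable projection property. -/
def EqVarProj (K : Set (Alg L)) : Prop :=
  ∀ (n : ℕ) (φ : List (L.Term (Fin n ⊕ Unit) × L.Term (Fin n ⊕ Unit))),
    ∃ ξ : List (L.Term (Fin n) × L.Term (Fin n)),
      (∀ A ∈ K, ∀ v : Fin n ⊕ Unit → A.carrier, ConjHolds φ v → ConjHolds ξ (v ∘ Sum.inl)) ∧
      (∀ ε : L.Term (Fin n) × L.Term (Fin n),
        (∀ A ∈ K, ∀ v : Fin n ⊕ Unit → A.carrier, ConjHolds φ v → EqHolds ε (v ∘ Sum.inl)) →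
        (∀ A ∈ K, ∀ v : Fin n → A.carrier, ConjHolds ξ v → EqHolds ε v))

/-- The conservative model extension property. -/
def ConsModelExt (K : Set (Alg L)) : Prop :=
  ∀ (n : ℕ) (pos neg : List (L.Term (Fin n ⊕ Unit) × L.Term (Fin n ⊕ Unit))),
    ∃ χ : L.Formula (Fin n), χ.IsQF ∧
      (∀ A ∈ K, ∀ v : Fin n ⊕ Unit → A.carrier,
        ConjHolds pos v → NegConjHolds neg v → χ.Realize (v ∘ Sum.inl)) ∧
      (∀ A ∈ K, ∀ a : Fin n → A.carrier,
        Substructure.closure L (Set.range a) = ⊤ →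
        χ.Realize a →
        (∀ ε : L.Term (Fin n) × L.Term (Fin n),
          (∀ B ∈ K, ∀ v : Fin n ⊕ Unit → B.carrier,
            ConjHolds pos v → EqHolds ε (v ∘ Sum.inl)) →
          EqHolds ε a) →
        ∃ B ∈ K, ∃ (g : A.carrier ↪[L] B.carrier) (b : B.carrier),
          ConjHolds pos (Sum.elim (⇑g ∘ a) fun _ => b) ∧
          NegConjHolds neg (Sum.elim (⇑g ∘ a) fun _ => b))

/-- The strengthened extension property of Proposition 3.8 (tuples of new variables, and no
conservativity conditions). -/
def StrongModelExt (K : Set (Alg L)) : Prop :=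
  ∀ (n m : ℕ) (pos neg : List (L.Term (Fin n ⊕ Fin m) × L.Term (Fin n ⊕ Fin m))),
    ∃ χ : L.Formula (Fin n), χ.IsQF ∧
      (∀ A ∈ K, ∀ v : Fin n ⊕ Fin m → A.carrier,
        ConjHolds pos v → NegConjHolds neg v → χ.Realize (v ∘ Sum.inl)) ∧
      (∀ A ∈ K, ∀ a : Fin n → A.carrier, χ.Realize a →
        ∃ B ∈ K, ∃ (g : A.carrier ↪[L] B.carrier) (b : Fin m → B.carrier),
          ConjHolds pos (Sum.elim (⇑g ∘ a) b) ∧ NegConjHolds neg (Sum.elim (⇑g ∘ a) b))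

/-- The equational variable restriction property. `π` is either `⊥` (encoded by `none`) or a
conjunction of equations. -/
def OptConjHolds {α : Type} {M : Type u} [L.Structure M] :
    Option (List (L.Term α × L.Term α)) → (α → M) → Prop
  | none => fun _ => False
  | some c => fun v => ConjHolds c v

def EqVarRestrict (K : Set (Alg L)) : Prop :=
  ∀ (n : ℕ) (γ : List (L.Term (Fin n ⊕ Unit) × L.Term (Fin n ⊕ Unit))),
    ∃ π : Option (List (L.Term (Fin n) × L.Term (Fin n))),
      (∀ A ∈ K, ∀ v : Fin n ⊕ Unit → A.carrier, OptConjHolds π (v ∘ Sum.inl) → ConjHolds γ v) ∧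
      (∀ φ : List (L.Term (Fin n) × L.Term (Fin n)),
        (∀ A ∈ K, ∀ v : Fin n ⊕ Unit → A.carrier, ConjHolds φ (v ∘ Sum.inl) → ConjHolds γ v) →
        (∀ A ∈ K, ∀ v : Fin n → A.carrier, ConjHolds φ v → OptConjHolds π v))

/-- A locally finite class of algebras. -/
def LocallyFinite (K : Set (Alg L)) : Prop :=
  ∀ A ∈ K, ∀ S : L.Substructure A.carrier, S.FG → Finite ↥S

/-- A congruence of an `L`-structure. -/
structure Congruence (L : FirstOrder.Language.{u, u}) (M : Type u) [L.Structure M] :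
    Type u where
  rel : M → M → Prop
  refl : ∀ a, rel a a
  symm : ∀ a b, rel a b → rel b a
  trans : ∀ a b c, rel a b → rel b c → rel a c
  compat : ∀ (n : ℕ) (f : L.Functions n) (x y : Fin n → M),
    (∀ i, rel (x i) (y i)) → rel (funMap f x) (funMap f y)

/-- The congruence generated by a set of pairs. -/
def congGen (L : FirstOrder.Language.{u, u}) (M : Type u) [L.Structure M]
    (s : Set (M × M)) : Congruence L M where
  rel a b := ∀ θ : Congruence L M, (∀ p ∈ s, θ.rel p.1 p.2) → θ.rel a b
  refl a θ _ := θ.refl a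
  symm a b h θ hs := θ.symm a b (h θ hs)
  trans a b c h₁ h₂ θ hs := θ.trans a b c (h₁ θ hs) (h₂ θ hs)
  compat n f x y h θ hs := θ.compat n f x y fun i => h i θ hs

/-- The principal congruence generated by a pair. -/
def principalCong (L : FirstOrder.Language.{u, u}) (M : Type u) [L.Structure M]
    (b₁ b₂ : M) : Congruence L M :=
  congGen L M {(b₁, b₂)}

/-- A compact (finitely generated) congruence. -/
def Congruence.IsCompact {M : Type u} [L.Structure M] (θ : Congruence L M) : Prop :=
  ∃ s : Set (M × M), s.Finite ∧ ∀ a b, θ.rel a b ↔ (congGen L M s).rel a b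

/-- The meet of two congruences. -/
def infCong {M : Type u} [L.Structure M] (θ₁ θ₂ : Congruence L M) : Congruence L M where
  rel a b := θ₁.rel a b ∧ θ₂.rel a b
  refl a := ⟨θ₁.refl a, θ₂.refl a⟩
  symm a b h := ⟨θ₁.symm a b h.1, θ₂.symm a b h.2⟩
  trans a b c h₁ h₂ := ⟨θ₁.trans a b c h₁.1 h₂.1, θ₂.trans a b c h₁.2 h₂.2⟩
  compat n f x y h :=
    ⟨θ₁.compat n f x y fun i => (h i).1, θ₂.compat n f x y fun i => (h i).2⟩

/-- The join of two congruences. -/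
def supCong {M : Type u} [L.Structure M] (θ₁ θ₂ : Congruence L M) : Congruence L M :=
  congGen L M {p : M × M | θ₁.rel p.1 p.2 ∨ θ₂.rel p.1 p.2}

/-- The compact intersection property. -/
def HasCIP (K : Set (Alg L)) : Prop :=
  ∀ A ∈ K, ∀ θ₁ θ₂ : Congruence L A.carrier,
    θ₁.IsCompact → θ₂.IsCompact → (infCong θ₁ θ₂).IsCompact

/-- Congruence distributivity of a class. -/
def CongDistributive (K : Set (Alg L)) : Prop :=
  ∀ A ∈ K, ∀ θ₁ θ₂ θ₃ : Congruence L A.carrier, ∀ a b : A.carrier,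
    (infCong θ₁ (supCong θ₂ θ₃)).rel a b ↔ (supCong (infCong θ₁ θ₂) (infCong θ₁ θ₃)).rel a b

/-- The congruence extension property. -/
def CongExtension (K : Set (Alg L)) : Prop :=
  ∀ A ∈ K, ∀ (S : L.Substructure A.carrier) (θ : Congruence L ↥S),
    ∃ θ' : Congruence L A.carrier, ∀ a b : ↥S, θ'.rel ↑a ↑b ↔ θ.rel a b

/-- Equationally definable principal congruences. -/
def EDPC (K : Set (Alg L)) : Prop :=
  ∃ φ : List (L.Term (Fin 4) × L.Term (Fin 4)),
    ∀ A ∈ K, ∀ a₁ a₂ b₁ b₂ : A.carrier,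
      (principalCong L A.carrier b₁ b₂).rel a₁ a₂ ↔ ConjHolds φ ![a₁, a₂, b₁, b₂]

/-- Quantifier-free definable principal congruences. -/
def QFDPC (K : Set (Alg L)) : Prop :=
  ∃ α : L.Formula (Fin 4), α.IsQF ∧
    ∀ A ∈ K, ∀ a₁ a₂ b₁ b₂ : A.carrier,
      (principalCong L A.carrier b₁ b₂).rel a₁ a₂ ↔ α.Realize ![a₁, a₂, b₁, b₂]

/-- Parametrically definable principal congruences. -/
def PDPC (K : Set (Alg L)) : Prop :=
  ∃ (m : ℕ) (ξ : L.Formula (Fin 4 ⊕ Fin m)), ξ.IsQF ∧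
    ∀ A ∈ K, ∀ a₁ a₂ b₁ b₂ : A.carrier,
      (principalCong L A.carrier b₁ b₂).rel a₁ a₂ ↔
        ∀ B ∈ K, ∀ g : A.carrier ↪[L] B.carrier, ∀ w : Fin m → B.carrier,
          ξ.Realize (Sum.elim (fun i : Fin 4 => g (![a₁, a₂, b₁, b₂] i)) w)

/-- The pair `(γ, φ)` witnesses a guarded deduction theorem for `K`. -/
def GuardedDTWitness (K : Set (Alg L)) (m : ℕ)
    (γ φ : List (L.Term (Fin 4 ⊕ Fin m) × L.Term (Fin 4 ⊕ Fin m))) : Prop :=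
  ∀ (p : ℕ) (s₁ s₂ t₁ t₂ : L.Term (Fin p)) (π : List (L.Term (Fin p) × L.Term (Fin p))),
    ((∀ A ∈ K, ∀ v : Fin p → A.carrier,
        ConjHolds π v → t₁.realize v = t₂.realize v → s₁.realize v = s₂.realize v) ↔
      (∀ A ∈ K, ∀ v : Fin p → A.carrier, ConjHolds π v →
        ∀ w : Fin m → A.carrier,
          ConjHolds γ (Sum.elim ![s₁.realize v, s₂.realize v, t₁.realize v, t₂.realize v] w) →
          ConjHolds φ (Sum.elim ![s₁.realize v, s₂.realize v, t₁.realize v, t₂.realize v] w))) ∧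
    (∀ σ : L.Term (Fin p) × L.Term (Fin p),
      ((∀ A ∈ K, ∀ v : Fin p → A.carrier, ∀ w : Fin m → A.carrier,
          ConjHolds π v →
          ConjHolds γ (Sum.elim ![s₁.realize v, s₂.realize v, t₁.realize v, t₂.realize v] w) →
          EqHolds σ v) ↔
        (∀ A ∈ K, ∀ v : Fin p → A.carrier, ConjHolds π v → EqHolds σ v)))

/-- `K` has a guarded deduction theorem. -/
def GuardedDT (K : Set (Alg L)) : Prop :=
  ∃ (m : ℕ) (γ φ : List (L.Term (Fin 4 ⊕ Fin m) × L.Term (Fin 4 ⊕ Fin m))),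
    GuardedDTWitness K m γ φ

/-- The term algebra. -/
instance termStructure (α : Type) : L.Structure (L.Term α) where
  funMap f x := Term.func f x
  RelMap _ _ := False

/-- The congruence of the term algebra consisting of the identities of the class `K`. -/
def varietyCong (K : Set (Alg L)) (α : Type) : Congruence L (L.Term α) where
  rel s t := ∀ A ∈ K, ∀ v : α → A.carrier, s.realize v = t.realize v
  refl _ _ _ _ := rfl
  symm _ _ h A hA v := (h A hA v).symm
  trans _ _ _ h₁ h₂ A hA v := (h₁ A hA v).trans (h₂ A hA v)
  compat n f x y h A hA v := by
    show Term.realize v (Term.func f x) = Term.realize v (Term.func f y)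
    simp only [Term.realize]
    exact congrArg (funMap f) (funext fun i => h i A hA v)

/-- The setoid underlying a congruence. -/
def Congruence.setoid {M : Type u} [L.Structure M] (θ : Congruence L M) : Setoid M :=
  ⟨θ.rel, ⟨θ.refl, fun h => θ.symm _ _ h, fun h h' => θ.trans _ _ _ h h'⟩⟩

/-- The quotient of an algebra by a congruence. -/
abbrev QuotAlg {M : Type u} [L.Structure M] (θ : Congruence L M) : Type u :=
  Quotient θ.setoid

noncomputable instance quotAlgStructure {M : Type u} [L.Structure M] (θ : Congruence L M) :
    L.Structure (QuotAlg θ) where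
  funMap f x := Quotient.mk θ.setoid (funMap f fun i => (x i).out)
  RelMap _ _ := False

/-- The free algebra of the class `K` over the variables `α`. -/
abbrev FreeAlg (K : Set (Alg L)) (α : Type) : Type u :=
  QuotAlg (varietyCong K α)

/-- `A` is finitely presented relative to the class `K`: it is isomorphic to a quotient of a
finitely generated `K`-free algebra by a compact congruence. -/
def IsFinitelyPresentedIn (K : Set (Alg L)) (A : Type u) [L.Structure A] : Prop :=
  ∃ (n : ℕ) (s : Set (FreeAlg K (Fin n) × FreeAlg K (Fin n))), s.Finite ∧
    Nonempty (A ≃[L] QuotAlg (congGen L (FreeAlg K (Fin n)) s))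

/-- Coherence: every finitely generated subalgebra of a finitely presented member of `K` is
finitely presented. -/
def Coherent (K : Set (Alg L)) : Prop :=
  ∀ A ∈ K, IsFinitelyPresentedIn K A.carrier →
    ∀ S : L.Substructure A.carrier, S.FG → IsFinitelyPresentedIn K ↥S

section Basics

variable {L : FirstOrder.Language.{u, u}}

theorem Congruence.out_rel {M : Type u} [L.Structure M] (θ : Congruence L M) (a : M) :
    θ.rel (Quotient.mk θ.setoid a).out a := by
  have h : Quotient.mk θ.setoid ((Quotient.mk θ.setoid a).out) = Quotient.mk θ.setoid a :=
    Quotient.out_eq _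
  exact Quotient.exact h

theorem quot_funMap {M : Type u} [L.Structure M] (θ : Congruence L M) {n : ℕ}
    (f : L.Functions n) (x : Fin n → M) :
    funMap (M := QuotAlg θ) f (fun i => Quotient.mk θ.setoid (x i)) =
      Quotient.mk θ.setoid (funMap f x) := by
  apply Quotient.sound
  exact θ.compat n f _ x fun i => θ.out_rel (x i)

theorem quot_funMap' {M : Type u} [L.Structure M] (θ : Congruence L M) {n : ℕ}
    (f : L.Functions n) (x : Fin n → QuotAlg θ) :
    funMap f x = Quotient.mk θ.setoid (funMap f (fun i => (x i).out)) := rfl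

theorem realize_quot {M : Type u} [L.Structure M] (θ : Congruence L M) {α : Type}
    (v : α → M) (t : L.Term α) :
    t.realize (fun a => Quotient.mk θ.setoid (v a)) = Quotient.mk θ.setoid (t.realize v) := by
  induction t with
  | var a => rfl
  | func f ts ih =>
    show funMap f _ = _
    rw [funext ih, quot_funMap]
    rfl

theorem term_realize_id {α : Type} (t : L.Term α) :
    t.realize (M := L.Term α) Term.var = t := by
  induction t with
  | var a => rfl
  | func f ts ih =>
    show funMap f _ = _
    show Term.func f _ = _
    exact congrArg _ (funext ih)

theorem term_realize_subst {α β : Type} (t : L.Term α) (p : α → L.Term β) :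
    t.realize (M := L.Term β) p = t.subst p := by
  induction t with
  | var a => rfl
  | func f ts ih =>
    show Term.func f _ = _
    exact congrArg _ (funext ih)

theorem subst_subst {α β γ : Type} (t : L.Term α) (p : α → L.Term β) (q : β → L.Term γ) :
    (t.subst p).subst q = t.subst (fun a => (p a).subst q) := by
  induction t with
  | var a => rfl
  | func f ts ih => exact congrArg _ (funext ih)

theorem subst_var_comp {α β : Type} (t : L.Term α) (g : α → β) :
    t.subst (fun a => Term.var (g a)) = t.relabel g := by
  induction t with
  | var a => rfl
  | func f ts ih => exact congrArg _ (funext ih)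

theorem congGen_mem {M : Type u} [L.Structure M] {s : Set (M × M)} {p : M × M} (hp : p ∈ s) :
    (congGen L M s).rel p.1 p.2 := fun θ h => h p hp

theorem congGen_le {M : Type u} [L.Structure M] {s : Set (M × M)} {θ : Congruence L M}
    (h : ∀ p ∈ s, θ.rel p.1 p.2) {a b : M} (hab : (congGen L M s).rel a b) : θ.rel a b :=
  hab θ h

/-- The kernel congruence of a function commuting with operations. -/
def kerCong {M N : Type u} [L.Structure M] [L.Structure N] (f : M → N)
    (hf : ∀ {n : ℕ} (g : L.Functions n) (x : Fin n → M), f (funMap g x) = funMap g (f ∘ x)) :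
    Congruence L M where
  rel a b := f a = f b
  refl _ := rfl
  symm _ _ h := h.symm
  trans _ _ _ h₁ h₂ := h₁.trans h₂
  compat n g x y h := by
    show f (funMap g x) = f (funMap g y)
    rw [hf g x, hf g y]
    exact congrArg _ (funext fun i => h i)

/-- Pullback of a congruence along a function commuting with operations. -/
def Congruence.comap {M N : Type u} [L.Structure M] [L.Structure N] (f : M → N)
    (hf : ∀ {n : ℕ} (g : L.Functions n) (x : Fin n → M), f (funMap g x) = funMap g (f ∘ x))
    (θ : Congruence L N) : Congruence L M where
  rel a b := θ.rel (f a) (f b)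
  refl a := θ.refl _
  symm _ _ h := θ.symm _ _ h
  trans _ _ _ h₁ h₂ := θ.trans _ _ _ h₁ h₂
  compat n g x y h := by
    show θ.rel (f (funMap g x)) (f (funMap g y))
    rw [hf g x, hf g y]
    exact θ.compat n g _ _ fun i => h i

end Basics
section Members

variable {L : FirstOrder.Language.{u, u}} [L.IsAlgebraic] {V : Set (Alg L)}

theorem realize_pi {ι : Type u} {M : ι → Type u} [∀ i, L.Structure (M i)] {α : Type}
    (t : L.Term α) (v : α → ∀ i, M i) (i : ι) :
    t.realize v i = t.realize (fun a => v a i) := by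
  induction t with
  | var a => rfl
  | func f ts ih =>
    show funMap f (fun j => Term.realize v (ts j)) i = funMap f _
    show funMap f (fun j => Term.realize v (ts j) i) = _
    exact congrArg _ (funext ih)

/-- A structure on `PUnit`. -/
instance punitStructure : L.Structure PUnit.{u + 1} where
  funMap _ _ := PUnit.unit
  RelMap _ _ := False

theorem mem_of_equiv (hV : IsVariety V) {A : Alg L} (hA : A ∈ V)
    {N : Type u} [L.Structure N] (e : A.carrier ≃[L] N) : Alg.mk N ∈ V := by
  have := hV.1 A hA N e.toHom
  rw [Equiv.coe_toHom] at this
  exact this e.surjective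

theorem prod_mem (hV : IsVariety V) {ι : Type u} (A : ι → Alg L) (hA : ∀ i, A i ∈ V) :
    Alg.mk (∀ i, (A i).carrier) ∈ V :=
  hV.2.2 ι (fun i => (A i).carrier) (fun i => hA i)

theorem triv_mem (hV : IsVariety V) : Alg.mk (∀ _ : PEmpty.{u + 1}, PUnit.{u + 1}) ∈ V :=
  hV.2.2 PEmpty.{u + 1} (fun _ => PUnit.{u + 1}) (fun i => i.elim)

theorem quotAlg_mem (hV : IsVariety V) {A : Alg L} (hA : A ∈ V) (θ : Congruence L A.carrier) :
    Alg.mk (QuotAlg θ) ∈ V := by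
  refine hV.1 A hA (QuotAlg θ)
    ⟨Quotient.mk θ.setoid, fun f x => (quot_funMap θ f x).symm, fun r _ _ => isEmptyElim r⟩
    fun q => ⟨q.out, Quotient.out_eq q⟩

/-- First-isomorphism-style equivalence between a quotient and the image substructure. -/
noncomputable def quotEquivOfHom {M A : Type u} [L.Structure M] [L.Structure A]
    (f : M → A) (hf : ∀ {k : ℕ} (g : L.Functions k) (x : Fin k → M),
      f (funMap g x) = funMap g (f ∘ x))
    (θ : Congruence L M) (hker : ∀ a b : M, θ.rel a b ↔ f a = f b)
    (S : L.Substructure A) (hmem : ∀ x, f x ∈ S) (hsurj : ∀ y : S, ∃ x, f x = (y : A)) :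
    QuotAlg θ ≃[L] ↥S where
  toEquiv := Equiv.ofBijective (fun q => (⟨f q.out, hmem _⟩ : S))
    ⟨fun a b hab => by
      rw [← Quotient.out_eq a, ← Quotient.out_eq b]
      exact Quotient.sound ((hker _ _).2 (congrArg Subtype.val hab)),
     fun y => by
      obtain ⟨x, hx⟩ := hsurj y
      refine ⟨Quotient.mk θ.setoid x, Subtype.ext ?_⟩
      show f (Quotient.mk θ.setoid x).out = (y : A)
      rw [(hker _ _).1 (θ.out_rel x), hx]⟩
  map_fun' := by
    intro k g x
    apply Subtype.ext
    show f (Quotient.mk θ.setoid (funMap g fun i => (x i).out)).out =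
      funMap g (fun i => f ((x i).out))
    rw [(hker _ _).1 (θ.out_rel (funMap g fun i => (x i).out)), hf]
    rfl
  map_rel' := fun r _ => isEmptyElim r

/-- Quotients by congruences with the same relation are isomorphic. -/
noncomputable def quotEquivOfRelIff {M : Type u} [L.Structure M] (θ θ' : Congruence L M)
    (h : ∀ a b, θ.rel a b ↔ θ'.rel a b) : QuotAlg θ ≃[L] QuotAlg θ' where
  toEquiv :=
  { toFun := fun q => Quotient.mk θ'.setoid q.out
    invFun := fun q => Quotient.mk θ.setoid q.out
    left_inv := fun q => by
      conv_rhs => rw [← Quotient.out_eq q]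
      exact Quotient.sound ((h _ _).2 (θ'.out_rel _))
    right_inv := fun q => by
      conv_rhs => rw [← Quotient.out_eq q]
      exact Quotient.sound ((h _ _).1 (θ.out_rel _)) }
  map_fun' := by
    intro k g x
    show Quotient.mk θ'.setoid (Quotient.mk θ.setoid (funMap g fun i => (x i).out)).out =
      Quotient.mk θ'.setoid (funMap g fun i => (Quotient.mk θ'.setoid ((x i).out)).out)
    refine Quotient.sound (θ'.trans _ _ _ ((h _ _).1 (θ.out_rel _)) ?_)
    exact θ'.compat _ g _ _ fun i => θ'.symm _ _ (θ'.out_rel ((x i).out))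
  map_rel' := fun r _ => isEmptyElim r

end Members
section Free

variable {L : FirstOrder.Language.{u, u}} [L.IsAlgebraic] {V : Set (Alg L)}

/-- The class of a term in the free algebra. -/
abbrev fmk (V : Set (Alg L)) {α : Type} (t : L.Term α) : FreeAlg V α :=
  Quotient.mk (varietyCong V α).setoid t

/-- A homomorphism built from a function commuting with operations. -/
def mkHom {M N : Type u} [L.Structure M] [L.Structure N] (f : M → N)
    (hf : ∀ {k : ℕ} (g : L.Functions k) (x : Fin k → M),
      f (funMap g x) = funMap g (f ∘ x)) : M →[L] N :=
  ⟨f, fun g x => hf g x, fun r _ => isEmptyElim r⟩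

theorem realize_term_hf {A : Type u} [L.Structure A] {α : Type} (v : α → A) :
    ∀ {k : ℕ} (g : L.Functions k) (x : Fin k → L.Term α),
      (funMap g x).realize v = funMap g ((fun t => t.realize v) ∘ x) :=
  fun _ _ => rfl

/-- Evaluation of free-algebra elements in a member of the variety. -/
def evalF {α : Type} (A : Alg L) (hA : A ∈ V) (v : α → A.carrier) :
    FreeAlg V α → A.carrier :=
  Quotient.lift (fun t => t.realize v) fun _ _ h => h A hA v

theorem evalF_mk {α : Type} (A : Alg L) (hA : A ∈ V) (v : α → A.carrier) (t : L.Term α) :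
    evalF A hA v (fmk V t) = t.realize v := rfl

theorem evalF_out {α : Type} (A : Alg L) (hA : A ∈ V) (v : α → A.carrier) (q : FreeAlg V α) :
    evalF A hA v q = q.out.realize v := by
  conv_lhs => rw [← Quotient.out_eq q]
  rfl

theorem evalF_funMap {α : Type} (A : Alg L) (hA : A ∈ V) (v : α → A.carrier) {k : ℕ}
    (g : L.Functions k) (x : Fin k → FreeAlg V α) :
    evalF A hA v (funMap g x) = funMap g ((evalF A hA v) ∘ x) := by
  show (funMap g fun i => (x i).out).realize v = _
  rw [realize_term_hf]
  exact congrArg _ (funext fun i => (evalF_out A hA v (x i)).symm)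

theorem freeAlg_mem (hV : IsVariety V) (α : Type) : Alg.mk (FreeAlg V α) ∈ V := by
  classical
  let ι := {θ : Congruence L (L.Term α) // Alg.mk (QuotAlg θ) ∈ V}
  let P := ∀ i : ι, QuotAlg i.1
  have hP : Alg.mk P ∈ V := hV.2.2 ι (fun i => QuotAlg i.1) fun i => i.2
  let H : L.Term α → P := fun t i => Quotient.mk i.1.setoid t
  have hHf : ∀ {k : ℕ} (g : L.Functions k) (x : Fin k → L.Term α),
      H (funMap g x) = funMap g (H ∘ x) := by
    intro k g x
    funext i
    exact (quot_funMap i.1 g x).symm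
  have hker : ∀ s t : L.Term α, (varietyCong V α).rel s t ↔ H s = H t := by
    intro s t
    constructor
    · intro h
      funext i
      have h2 := h (Alg.mk (QuotAlg i.1)) i.2 fun a => Quotient.mk i.1.setoid (Term.var a)
      rw [realize_quot, realize_quot, term_realize_id, term_realize_id] at h2
      exact h2
    · intro h A hA v
      let θ : Congruence L (L.Term α) := kerCong (fun t => t.realize v) (realize_term_hf v)
      have hθV : Alg.mk (QuotAlg θ) ∈ V := by
        have hS : Alg.mk (↥(Hom.range (mkHom (fun t : L.Term α => t.realize v) (realize_term_hf v)))) ∈ V := hV.2.1 A hA _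
        refine mem_of_equiv hV hS (FirstOrder.Language.Equiv.symm ?_)
        exact quotEquivOfHom (fun t : L.Term α => t.realize v) (realize_term_hf v) θ
          (fun _ _ => Iff.rfl) _ (fun x => Hom.mem_range.2 ⟨x, rfl⟩)
          (fun y => Hom.mem_range.1 y.2)
      have := congrFun h (⟨θ, hθV⟩ : ι)
      exact Quotient.exact this
  let SP := Hom.range (mkHom H hHf)
  have hSP : Alg.mk (↥SP) ∈ V := hV.2.1 (Alg.mk P) hP SP
  refine mem_of_equiv hV hSP (FirstOrder.Language.Equiv.symm ?_)
  exact quotEquivOfHom H hHf (varietyCong V α)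
    hker SP (fun x => Hom.mem_range.2 ⟨x, rfl⟩) (fun y => Hom.mem_range.1 y.2)

/-- Semantic consequence of a finite set of equations, relative to `V`. -/
def Csq (V : Set (Alg L)) {α : Type} (E : List (L.Term α × L.Term α)) (a b : L.Term α) : Prop :=
  ∀ A ∈ V, ∀ v : α → A.carrier, ConjHolds E v → a.realize v = b.realize v

/-- The image of a list of pairs of terms in the free algebra. -/
def imgE (V : Set (Alg L)) {α : Type} (E : List (L.Term α × L.Term α)) :
    Set (FreeAlg V α × FreeAlg V α) :=
  {p | p ∈ E.map fun e => (fmk V e.1, fmk V e.2)}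

theorem imgE_finite {α : Type} (E : List (L.Term α × L.Term α)) : (imgE V E).Finite :=
  List.finite_toSet _

theorem mem_imgE {α : Type} {E : List (L.Term α × L.Term α)} {e : L.Term α × L.Term α}
    (he : e ∈ E) : (fmk V e.1, fmk V e.2) ∈ imgE V E :=
  List.mem_map.2 ⟨e, he, rfl⟩

theorem realize_fmk {α : Type} (E : List (L.Term α × L.Term α)) (t : L.Term α) :
    t.realize (fun x => Quotient.mk (congGen L (FreeAlg V α) (imgE V E)).setoid
        (fmk V (Term.var x))) =
      Quotient.mk (congGen L (FreeAlg V α) (imgE V E)).setoid (fmk V t) := by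
  rw [realize_quot, realize_quot, term_realize_id]

/-- The key translation lemma: congruence generation in the free algebra matches
semantic consequence. -/
theorem congGen_imgE_iff (hV : IsVariety V) {α : Type} (E : List (L.Term α × L.Term α))
    (a b : L.Term α) :
    (congGen L (FreeAlg V α) (imgE V E)).rel (fmk V a) (fmk V b) ↔ Csq V E a b := by
  constructor
  · intro h A hA v hE
    have := h (kerCong (evalF A hA v) (evalF_funMap A hA v)) ?_
    · exact this
    · rintro p hp
      obtain ⟨e, he, rfl⟩ := List.mem_map.1 hp
      exact hE e he
  · intro h
    have hmem : Alg.mk (QuotAlg (congGen L (FreeAlg V α) (imgE V E))) ∈ V :=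
      quotAlg_mem hV (freeAlg_mem hV α) _
    have hE : ConjHolds E fun x => Quotient.mk (congGen L (FreeAlg V α) (imgE V E)).setoid
        (fmk V (Term.var x)) := by
      intro e he
      show _ = _
      rw [realize_fmk, realize_fmk]
      exact Quotient.sound (congGen_mem (mem_imgE he))
    have h2 := h _ hmem _ hE
    rw [realize_fmk, realize_fmk] at h2
    exact Quotient.exact h2

end Free
section DNF

variable {L : FirstOrder.Language.{u, u}} [L.IsAlgebraic] {V : Set (Alg L)}

theorem conjHolds_cons {α : Type} {M : Type u} [L.Structure M]
    {e : L.Term α × L.Term α} {E : List (L.Term α × L.Term α)} {v : α → M} :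
    ConjHolds (e :: E) v ↔ EqHolds e v ∧ ConjHolds E v := by
  unfold ConjHolds
  exact List.forall_mem_cons

theorem conjHolds_append {α : Type} {M : Type u} [L.Structure M]
    {E F : List (L.Term α × L.Term α)} {v : α → M} :
    ConjHolds (E ++ F) v ↔ ConjHolds E v ∧ ConjHolds F v := by
  unfold ConjHolds
  exact List.forall_mem_append

theorem negConjHolds_append {α : Type} {M : Type u} [L.Structure M]
    {E F : List (L.Term α × L.Term α)} {v : α → M} :
    NegConjHolds (E ++ F) v ↔ NegConjHolds E v ∧ NegConjHolds F v := by
  unfold NegConjHolds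
  exact List.forall_mem_append

theorem eqHolds_relabel {α β : Type} {M : Type u} [L.Structure M] (g : α → β)
    (e : L.Term α × L.Term α) (v : β → M) :
    EqHolds (e.1.relabel g, e.2.relabel g) v ↔ EqHolds e (v ∘ g) := by
  unfold EqHolds
  rw [Term.realize_relabel, Term.realize_relabel]

theorem conjHolds_map_relabel {α β : Type} {M : Type u} [L.Structure M] (g : α → β)
    (E : List (L.Term α × L.Term α)) (v : β → M) :
    ConjHolds (E.map fun e => (e.1.relabel g, e.2.relabel g)) v ↔ ConjHolds E (v ∘ g) := by
  constructor
  · intro h e he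
    exact (eqHolds_relabel g e v).1 (h _ (List.mem_map.2 ⟨e, he, rfl⟩))
  · intro h e' he'
    obtain ⟨e, he, rfl⟩ := List.mem_map.1 he'
    exact (eqHolds_relabel g e v).2 (h e he)

theorem negConjHolds_map_relabel {α β : Type} {M : Type u} [L.Structure M] (g : α → β)
    (E : List (L.Term α × L.Term α)) (v : β → M) :
    NegConjHolds (E.map fun e => (e.1.relabel g, e.2.relabel g)) v ↔ NegConjHolds E (v ∘ g) := by
  constructor
  · intro h e he
    exact fun hh => h _ (List.mem_map.2 ⟨e, he, rfl⟩) ((eqHolds_relabel g e v).2 hh)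
  · rintro h e' he'
    obtain ⟨e, he, rfl⟩ := List.mem_map.1 he'
    exact fun hh => h e he ((eqHolds_relabel g e v).1 hh)

/-- The conjunction of a list of equations, as a quantifier-free formula. -/
def eqsFormula {α : Type} : List (L.Term α × L.Term α) → L.Formula α
  | [] => ⊤
  | e :: E => e.1.equal e.2 ⊓ eqsFormula E

theorem eqsFormula_isQF {α : Type} (E : List (L.Term α × L.Term α)) :
    (eqsFormula E).IsQF := by
  induction E with
  | nil => exact BoundedFormula.IsQF.top
  | cons e E ih => exact ((BoundedFormula.IsAtomic.equal _ _).isQF).inf ih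

theorem realize_eqsFormula {α : Type} {M : Type u} [L.Structure M]
    (E : List (L.Term α × L.Term α)) (v : α → M) :
    (eqsFormula E).Realize v ↔ ConjHolds E v := by
  induction E with
  | nil => simp [eqsFormula, ConjHolds]
  | cons e E ih =>
    rw [eqsFormula, Formula.realize_inf, Formula.realize_equal, ih, conjHolds_cons]
    rfl

/-- Simultaneous disjunctive normal forms of a formula and its negation. Each "literal block"
is a pair (positive equations, negated equations). Junk values at `rel` and `all`. -/
def dnfP {α : Type} :
    ∀ {k : ℕ}, L.BoundedFormula α k →
      List (List (L.Term (α ⊕ Fin k) × L.Term (α ⊕ Fin k)) ×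
            List (L.Term (α ⊕ Fin k) × L.Term (α ⊕ Fin k))) ×
      List (List (L.Term (α ⊕ Fin k) × L.Term (α ⊕ Fin k)) ×
            List (L.Term (α ⊕ Fin k) × L.Term (α ⊕ Fin k)))
  | _, .falsum => ([], [([], [])])
  | _, .equal t₁ t₂ => ([([(t₁, t₂)], [])], [([], [(t₁, t₂)])])
  | _, .rel _ _ => ([], [])
  | _, .imp f g =>
      ((dnfP f).2 ++ (dnfP g).1,
        (dnfP f).1.flatMap fun d => (dnfP g).2.map fun d' => (d.1 ++ d'.1, d.2 ++ d'.2))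
  | _, .all _ => ([], [])

theorem dnfP_correct {α : Type} {M : Type u} [L.Structure M] {k : ℕ}
    {φ : L.BoundedFormula α k} (h : φ.IsQF) (v : α → M) (xs : Fin k → M) :
    (φ.Realize v xs ↔
      ∃ d ∈ (dnfP φ).1, ConjHolds d.1 (Sum.elim v xs) ∧ NegConjHolds d.2 (Sum.elim v xs)) ∧
    (¬ φ.Realize v xs ↔
      ∃ d ∈ (dnfP φ).2, ConjHolds d.1 (Sum.elim v xs) ∧ NegConjHolds d.2 (Sum.elim v xs)) := by
  induction h with
  | falsum =>
    constructor
    · simp [dnfP, BoundedFormula.Realize]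
    · simp [dnfP, BoundedFormula.Realize, ConjHolds, NegConjHolds]
  | of_isAtomic h =>
    cases h with
    | equal t₁ t₂ =>
      constructor
      · rw [BoundedFormula.realize_bdEqual]
        simp only [Term.bdEqual, dnfP, List.mem_singleton]
        constructor
        · intro hh
          refine ⟨_, rfl, ?_, ?_⟩
          · intro e he
            rw [List.mem_singleton] at he
            subst he
            exact hh
          · intro e he
            exact absurd he (List.not_mem_nil (a := e))
        · rintro ⟨d, rfl, hd, -⟩
          exact hd _ (List.mem_singleton.2 rfl)
      · rw [BoundedFormula.realize_bdEqual]
        simp only [Term.bdEqual, dnfP, List.mem_singleton]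
        constructor
        · intro hh
          refine ⟨_, rfl, ?_, ?_⟩
          · intro e he
            exact absurd he (List.not_mem_nil (a := e))
          · intro e he
            rw [List.mem_singleton] at he
            subst he
            exact hh
        · rintro ⟨d, rfl, -, hd⟩
          exact hd _ (List.mem_singleton.2 rfl)
    | rel R ts => exact isEmptyElim R
  | @imp φ₁ φ₂ h1 h2 ih1 ih2 =>
    rw [BoundedFormula.realize_imp]
    constructor
    · constructor
      · intro hh
        rcases Classical.em (φ₁.Realize v xs) with hp | hp
        · obtain ⟨d, hd, hc⟩ := (ih2.1).1 (hh hp)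
          exact ⟨d, by simp [dnfP, List.mem_append, hd], hc⟩
        · obtain ⟨d, hd, hc⟩ := (ih1.2).1 hp
          exact ⟨d, by simp [dnfP, List.mem_append, hd], hc⟩
      · rintro ⟨d, hd, hc1, hc2⟩ hp
        rcases List.mem_append.1 hd with hd | hd
        · exact absurd hp (((ih1.2).2 ⟨d, hd, hc1, hc2⟩))
        · exact ((ih2.1).2 ⟨d, hd, hc1, hc2⟩)
    · constructor
      · intro hh
        have hp : φ₁.Realize v xs := by
          by_contra hq
          exact hh fun hr => absurd hr hq
        have hq : ¬ φ₂.Realize v xs := fun hr => hh fun _ => hr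
        obtain ⟨d1, hd1, hc1, hn1⟩ := (ih1.1).1 hp
        obtain ⟨d2, hd2, hc2, hn2⟩ := (ih2.2).1 hq
        refine ⟨(d1.1 ++ d2.1, d1.2 ++ d2.2), ?_, ?_, ?_⟩
        · simp only [dnfP, List.mem_flatMap]
          exact ⟨d1, hd1, List.mem_map.2 ⟨d2, hd2, rfl⟩⟩
        · exact conjHolds_append.2 ⟨hc1, hc2⟩
        · exact negConjHolds_append.2 ⟨hn1, hn2⟩
      · rintro ⟨d, hd, hc, hn⟩ hh
        simp only [dnfP, List.mem_flatMap, List.mem_map] at hd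
        obtain ⟨d1, hd1, d2, hd2, rfl⟩ := hd
        have hp := (ih1.1).2 ⟨d1, hd1, (conjHolds_append.1 hc).1, (negConjHolds_append.1 hn).1⟩
        have hq := (ih2.2).2 ⟨d2, hd2, (conjHolds_append.1 hc).2, (negConjHolds_append.1 hn).2⟩
        exact hq (hh hp)

end DNF
section EVP

variable {L : FirstOrder.Language.{u, u}} [L.IsAlgebraic] {V : Set (Alg L)}

theorem eqHolds_pi_iff {ι : Type u} {M : ι → Type u} [∀ i, L.Structure (M i)] {α : Type}
    (e : L.Term α × L.Term α) (v : α → ∀ i, M i) :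
    EqHolds e v ↔ ∀ i, EqHolds e (fun a => v a i) := by
  unfold EqHolds
  rw [funext_iff]
  constructor
  · intro h i
    have := h i
    rwa [realize_pi, realize_pi] at this
  · intro h i
    rw [realize_pi, realize_pi]
    exact h i

/-- The trivial (one-element) algebra, as an empty product. -/
def trivAlg (L : FirstOrder.Language.{u, u}) : Alg L :=
  Alg.mk (∀ _ : PEmpty.{u + 1}, PUnit.{u + 1})

theorem trivAlg_mem (hV : IsVariety V) : trivAlg L ∈ V :=
  triv_mem hV

theorem trivAlg_conj {α : Type} (E : List (L.Term α × L.Term α))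
    (v : α → (trivAlg L).carrier) : ConjHolds E v :=
  fun _ _ => funext fun i => i.elim

theorem eqVarProj_to_varProj (h : EqVarProj V) : VarProj V := by
  intro n φ
  obtain ⟨ξ, h1, h2⟩ := h n φ
  exact ⟨eqsFormula ξ, eqsFormula_isQF ξ,
    fun A hA v hv => (realize_eqsFormula ξ _).2 (h1 A hA v hv),
    fun ε hε A hA v hv => h2 ε hε A hA v ((realize_eqsFormula ξ v).1 hv)⟩

theorem varProj_to_eqVarProj (hV : IsVariety V) (h : VarProj V) : EqVarProj V := by
  classical
  intro n φ
  obtain ⟨ξ, hQF, hξ1, hξ2⟩ := h n φ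
  let g0 : Fin n ⊕ Fin 0 → Fin n := Sum.elim id Fin.elim0
  let D := (dnfP ξ).1.map fun d =>
    (d.1.map (fun e => (e.1.relabel g0, e.2.relabel g0)),
     d.2.map (fun e => (e.1.relabel g0, e.2.relabel g0)))
  have hcomp : ∀ {A : Type u} (w : Fin n → A), (w ∘ g0) = Sum.elim w (default : Fin 0 → A) := by
    intro A w
    funext x
    cases x with
    | inl a => rfl
    | inr i => exact i.elim0
  have hD : ∀ {A : Type u} [L.Structure A] (w : Fin n → A),
      ξ.Realize w ↔ ∃ d ∈ D, ConjHolds d.1 w ∧ NegConjHolds d.2 w := by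
    intro A _ w
    have hc := (dnfP_correct hQF w (default : Fin 0 → A)).1
    constructor
    · intro hr
      obtain ⟨d, hd, h1, h2⟩ := hc.1 hr
      refine ⟨_, List.mem_map.2 ⟨d, hd, rfl⟩, ?_, ?_⟩
      · rw [conjHolds_map_relabel, hcomp]
        exact h1
      · rw [negConjHolds_map_relabel, hcomp]
        exact h2
    · rintro ⟨d', hd', h1, h2⟩
      obtain ⟨d, hd, rfl⟩ := List.mem_map.1 hd'
      rw [conjHolds_map_relabel, hcomp] at h1
      rw [negConjHolds_map_relabel, hcomp] at h2
      exact hc.2 ⟨d, hd, h1, h2⟩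
  have key : ∃ d ∈ D,
      (∃ B, B ∈ V ∧ ∃ wB : Fin n → B.carrier, ConjHolds d.1 wB ∧ NegConjHolds d.2 wB) ∧
      ∀ A, A ∈ V → ∀ v : Fin n ⊕ Unit → A.carrier, ConjHolds φ v →
        ConjHolds d.1 (v ∘ Sum.inl) := by
    by_contra hcon
    push_neg at hcon
    have choice : ∀ i : Fin D.length, ∃ A : Alg L, A ∈ V ∧ ∃ v : Fin n ⊕ Unit → A.carrier,
        ConjHolds φ v ∧
        ((∃ B, B ∈ V ∧ ∃ wB : Fin n → B.carrier,
            ConjHolds (D.get i).1 wB ∧ NegConjHolds (D.get i).2 wB) →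
          ∃ e ∈ (D.get i).1, ¬ EqHolds e (v ∘ Sum.inl)) := by
      intro i
      rcases Classical.em (∃ B, B ∈ V ∧ ∃ wB : Fin n → B.carrier,
          ConjHolds (D.get i).1 wB ∧ NegConjHolds (D.get i).2 wB) with hs | hs
      · have hng := hcon (D.get i) (List.mem_iff_get.2 ⟨i, rfl⟩) hs
        obtain ⟨A, hA, v, hφv, hnc⟩ := hng
        have hex : ∃ e ∈ (D.get i).1, ¬ EqHolds e (v ∘ Sum.inl) := by
          by_contra hall
          push_neg at hall
          exact hnc fun e he => hall e he
        exact ⟨A, hA, v, hφv, fun _ => hex⟩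
      · exact ⟨trivAlg L, trivAlg_mem hV, fun _ _ => PUnit.unit, trivAlg_conj φ _,
          fun hs' => absurd hs' hs⟩
    choose AA hAV vv hφv hbad using choice
    let C : Alg L := Alg.mk (∀ i : ULift.{u} (Fin D.length), (AA i.down).carrier)
    have hC : C ∈ V := prod_mem hV _ fun i => hAV i.down
    let w : Fin n ⊕ Unit → C.carrier := fun x i => vv i.down x
    have hφC : ConjHolds φ w := fun e he => (eqHolds_pi_iff e w).2 fun i => hφv i.down e he
    have hre := hξ1 C hC w hφC
    rw [hD] at hre
    obtain ⟨d, hdD, hd1, hd2⟩ := hre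
    obtain ⟨i, hi⟩ := List.mem_iff_get.1 hdD
    obtain ⟨e, heD, hbadE⟩ := hbad i (by rw [hi]; exact ⟨C, hC, w ∘ Sum.inl, hd1, hd2⟩)
    rw [hi] at heD
    exact hbadE ((eqHolds_pi_iff e (w ∘ Sum.inl)).1 (hd1 e heD) ⟨i⟩)
  obtain ⟨d, hdD, ⟨B, hB, wB, hwB1, hwB2⟩, hGood⟩ := key
  refine ⟨d.1, hGood, ?_⟩
  intro ε hyp A hA w hconj
  have hξε := hξ2 ε hyp
  let C : Alg L := Alg.mk (∀ b : ULift.{u} Bool, (cond b.down A B).carrier)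
  have hC : C ∈ V := prod_mem hV (fun b : ULift.{u} Bool => cond b.down A B) fun b => by
    rcases b with ⟨b⟩
    cases b
    · exact hB
    · exact hA
  let w2 : Fin n → C.carrier := fun a b =>
    Bool.rec (motive := fun bb => (cond bb A B).carrier) (wB a) (w a) b.down
  have hc1 : ConjHolds d.1 w2 := by
    intro e he
    refine (eqHolds_pi_iff e w2).2 fun b => ?_
    rcases b with ⟨b⟩
    cases b
    · exact hwB1 e he
    · exact hconj e he
  have hc2 : NegConjHolds d.2 w2 := fun e he hEq =>
    hwB2 e he ((eqHolds_pi_iff e w2).1 hEq ⟨false⟩)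
  have hrw2 : ξ.Realize w2 := (hD w2).2 ⟨d, hdD, hc1, hc2⟩
  exact (eqHolds_pi_iff ε w2).1 (hξε C hC w2 hrw2) ⟨true⟩

end EVP
section Transfer

variable {L : FirstOrder.Language.{u, u}} [L.IsAlgebraic] {V : Set (Alg L)}

theorem subst_var {α : Type} (t : L.Term α) : t.subst Term.var = t := by
  induction t with
  | var a => rfl
  | func f ts ih => exact congrArg _ (funext ih)

theorem realize_mk_fmk {α β : Type} (θ' : Congruence L (FreeAlg V β)) (p : α → L.Term β)
    (t : L.Term α) :
    t.realize (fun a => Quotient.mk θ'.setoid (fmk V (p a))) =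
      Quotient.mk θ'.setoid (fmk V (t.subst p)) := by
  rw [realize_quot, realize_quot, term_realize_subst]

theorem finite_eq_imgE {α : Type} {s : Set (FreeAlg V α × FreeAlg V α)} (hs : s.Finite) :
    ∃ E : List (L.Term α × L.Term α), s = imgE V E := by
  classical
  refine ⟨hs.toFinset.toList.map fun p => (p.1.out, p.2.out), ?_⟩
  ext p
  unfold imgE
  simp only [Set.mem_setOf_eq, List.map_map, List.mem_map]
  constructor
  · intro hp
    refine ⟨p, by simp [hp], ?_⟩
    show (fmk V p.1.out, fmk V p.2.out) = p
    rw [Prod.ext_iff]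
    exact ⟨Quotient.out_eq _, Quotient.out_eq _⟩
  · rintro ⟨q, hq, rfl⟩
    simp only [Set.Finite.mem_toFinset, Finset.mem_toList] at hq
    have : (fmk V q.1.out, fmk V q.2.out) = q := by
      rw [Prod.ext_iff]
      exact ⟨Quotient.out_eq _, Quotient.out_eq _⟩
    show (fmk V q.1.out, fmk V q.2.out) ∈ s
    rwa [this]

/-- The substitution map between free algebras. -/
def substF (V : Set (Alg L)) {α β : Type} (q : β → L.Term α) : FreeAlg V β → FreeAlg V α :=
  Quotient.lift (fun t => fmk V (t.subst q)) fun s t h =>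
    Quotient.sound fun A hA v => by
      rw [Term.realize_subst, Term.realize_subst]
      exact h A hA _

theorem substF_mk {α β : Type} (q : β → L.Term α) (t : L.Term β) :
    substF V q (fmk V t) = fmk V (t.subst q) := rfl

theorem substF_out {α β : Type} (q : β → L.Term α) (x : FreeAlg V β) :
    substF V q x = fmk V (x.out.subst q) := by
  conv_lhs => rw [← Quotient.out_eq x]
  rfl

theorem substF_funMap {α β : Type} (q : β → L.Term α) {k : ℕ} (g : L.Functions k)
    (x : Fin k → FreeAlg V β) :
    substF V q (funMap g x) = funMap g (substF V q ∘ x) := by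
  show fmk V ((funMap g fun i => (x i).out).subst q) = _
  have h2 : funMap g (substF V q ∘ x) =
      fmk V (funMap g fun i => ((x i).out).subst q) := by
    have h3 : (substF V q ∘ x) = fun i => fmk V (((x i).out).subst q) :=
      funext fun i => substF_out q (x i)
    rw [h3, quot_funMap]
  rw [h2]
  rfl

theorem congr_subst_of_var {α : Type} (θ : Congruence L (FreeAlg V α)) (r : α → L.Term α)
    (hr : ∀ a, θ.rel (fmk V (Term.var a)) (fmk V (r a))) :
    ∀ t : L.Term α, θ.rel (fmk V t) (fmk V (t.subst r))
  | .var a => hr a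
  | .func g ts => by
    have h1 := θ.compat _ g (fun i => fmk V (ts i)) (fun i => fmk V ((ts i).subst r))
      fun i => congr_subst_of_var θ r hr (ts i)
    rwa [quot_funMap, quot_funMap] at h1

theorem equiv_mk_subst {α β : Type} (θ₁ : Congruence L (FreeAlg V α))
    (θ₂ : Congruence L (FreeAlg V β)) (k : QuotAlg θ₁ ≃[L] QuotAlg θ₂) (p : α → L.Term β)
    (hp : ∀ a, k (Quotient.mk θ₁.setoid (fmk V (Term.var a))) =
      Quotient.mk θ₂.setoid (fmk V (p a)))
    (c : L.Term α) :
    k (Quotient.mk θ₁.setoid (fmk V c)) = Quotient.mk θ₂.setoid (fmk V (c.subst p)) := by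
  have h1 : Quotient.mk θ₁.setoid (fmk V c) =
      c.realize (fun a => Quotient.mk θ₁.setoid (fmk V (Term.var a))) := by
    rw [realize_mk_fmk, subst_var]
  rw [h1, ← FirstOrder.Language.HomClass.realize_term (g := k),
    show (⇑k ∘ fun a => Quotient.mk θ₁.setoid (fmk V (Term.var a))) =
      fun a => Quotient.mk θ₂.setoid (fmk V (p a)) from funext hp, realize_mk_fmk]

/-- Transfer of finite presentability along an isomorphism (Tietze-style argument). -/
theorem presentation_transfer (hV : IsVariety V) {α β : Type}
    (ψ : Congruence L (FreeAlg V α)) (E' : List (L.Term β × L.Term β))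
    (k : QuotAlg ψ ≃[L] QuotAlg (congGen L (FreeAlg V β) (imgE V E')))
    (gen : List α) (hgen : ∀ a : α, a ∈ gen) :
    ∃ E : List (L.Term α × L.Term α),
      ∀ x y : FreeAlg V α, ψ.rel x y ↔ (congGen L (FreeAlg V α) (imgE V E)).rel x y := by
  classical
  set θB := congGen L (FreeAlg V β) (imgE V E') with hθB
  let p : α → L.Term β := fun a => ((k (Quotient.mk ψ.setoid (fmk V (Term.var a)))).out).out
  have hp : ∀ a, k (Quotient.mk ψ.setoid (fmk V (Term.var a))) =
      Quotient.mk θB.setoid (fmk V (p a)) := by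
    intro a
    show _ = Quotient.mk θB.setoid (Quotient.mk (varietyCong V β).setoid _)
    rw [Quotient.out_eq, Quotient.out_eq]
  let q : β → L.Term α := fun b => ((k.symm (Quotient.mk θB.setoid (fmk V (Term.var b)))).out).out
  have hq : ∀ b, k.symm (Quotient.mk θB.setoid (fmk V (Term.var b))) =
      Quotient.mk ψ.setoid (fmk V (q b)) := by
    intro b
    show _ = Quotient.mk ψ.setoid (Quotient.mk (varietyCong V α).setoid _)
    rw [Quotient.out_eq, Quotient.out_eq]
  have hkc : ∀ c : L.Term α, k (Quotient.mk ψ.setoid (fmk V c)) =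
      Quotient.mk θB.setoid (fmk V (c.subst p)) := equiv_mk_subst ψ θB k p hp
  have hks : ∀ d : L.Term β, k.symm (Quotient.mk θB.setoid (fmk V d)) =
      Quotient.mk ψ.setoid (fmk V (d.subst q)) := equiv_mk_subst θB ψ k.symm q hq
  let E : List (L.Term α × L.Term α) :=
    (gen.map fun a => (Term.var a, (p a).subst q)) ++
      (E'.map fun e => (e.1.subst q, e.2.subst q))
  set θ₀ := congGen L (FreeAlg V α) (imgE V E) with hθ₀
  have hgen1 : ∀ a : α, θ₀.rel (fmk V (Term.var a)) (fmk V ((p a).subst q)) := by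
    intro a
    exact congGen_mem (mem_imgE (List.mem_append_left _
      (List.mem_map.2 ⟨a, hgen a, rfl⟩)))
  have hgen2 : ∀ e ∈ E', θ₀.rel (fmk V (e.1.subst q)) (fmk V (e.2.subst q)) := by
    intro e he
    exact congGen_mem (mem_imgE (List.mem_append_right _ (List.mem_map.2 ⟨e, he, rfl⟩)))
  have main : ∀ c d : L.Term α, ψ.rel (fmk V c) (fmk V d) ↔ θ₀.rel (fmk V c) (fmk V d) := by
    intro c d
    constructor
    · intro h
      have hk2 : Quotient.mk θB.setoid (fmk V (c.subst p)) =
          Quotient.mk θB.setoid (fmk V (d.subst p)) := by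
        rw [← hkc, ← hkc]
        exact congrArg k (Quotient.sound h)
      have hBrel : θB.rel (fmk V (c.subst p)) (fmk V (d.subst p)) := Quotient.exact hk2
      have hΘ : θ₀.rel (substF V q (fmk V (c.subst p))) (substF V q (fmk V (d.subst p))) :=
        congGen_le (s := imgE V E')
          (by
            rintro pr hpr
            obtain ⟨e, he, rfl⟩ := List.mem_map.1 hpr
            exact hgen2 e he)
          (θ := Congruence.comap (substF V q) (substF_funMap q) θ₀) hBrel
      rw [substF_mk, substF_mk, subst_subst, subst_subst] at hΘ
      refine θ₀.trans _ _ _ (congr_subst_of_var θ₀ (fun a => (p a).subst q) hgen1 c)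
        (θ₀.trans _ _ _ hΘ (θ₀.symm _ _ ?_))
      exact congr_subst_of_var θ₀ (fun a => (p a).subst q) hgen1 d
    · intro h
      refine congGen_le (s := imgE V E) ?_ (θ := ψ) h
      rintro pr hpr
      obtain ⟨e, he, rfl⟩ := List.mem_map.1 hpr
      rcases List.mem_append.1 he with he1 | he2
      · obtain ⟨a, _, rfl⟩ := List.mem_map.1 he1
        show ψ.rel (fmk V (Term.var a)) (fmk V ((p a).subst q))
        have h1 : Quotient.mk ψ.setoid (fmk V ((p a).subst q)) =
            k.symm (Quotient.mk θB.setoid (fmk V (p a))) := (hks (p a)).symm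
        have h2 : Quotient.mk ψ.setoid (fmk V (Term.var a)) =
            k.symm (Quotient.mk θB.setoid (fmk V (p a))) := by
          rw [← hp a, FirstOrder.Language.Equiv.symm_apply_apply]
        exact Quotient.exact (h2.trans h1.symm)
      · obtain ⟨e', he', rfl⟩ := List.mem_map.1 he2
        show ψ.rel (fmk V (e'.1.subst q)) (fmk V (e'.2.subst q))
        have h1 : Quotient.mk θB.setoid (fmk V e'.1) = Quotient.mk θB.setoid (fmk V e'.2) :=
          Quotient.sound (congGen_mem (mem_imgE he'))
        have h2 := congrArg k.symm h1
        rw [hks, hks] at h2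
        exact Quotient.exact h2
  refine ⟨E, fun x y => ?_⟩
  rw [← Quotient.out_eq x, ← Quotient.out_eq y]
  exact main x.out y.out

end Transfer
section ProjMany

variable {L : FirstOrder.Language.{u, u}} [L.IsAlgebraic] {V : Set (Alg L)}

/-- `Fin (r+1)` is `Fin r` plus a point. -/
def finSuccSum (r : ℕ) : Fin (r + 1) ≃ (Fin r ⊕ Unit) where
  toFun := Fin.lastCases (Sum.inr ()) fun j => Sum.inl j
  invFun := Sum.elim Fin.castSucc fun _ => Fin.last r
  left_inv i := Fin.lastCases (by simp) (fun j => by simp) i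
  right_inv x := by rcases x with j | ⟨⟩ <;> simp

/-- Regrouping of variables used in the elimination induction. -/
def regroup (p r : ℕ) : (Fin p ⊕ Fin (r + 1)) ≃ (Fin (p + r) ⊕ Unit) :=
  ((Equiv.refl (Fin p)).sumCongr (finSuccSum r)).trans
    ((Equiv.sumAssoc (Fin p) (Fin r) Unit).symm.trans
      (finSumFinEquiv.sumCongr (Equiv.refl Unit)))

theorem regroup_inl (p r : ℕ) (x : Fin p) :
    regroup p r (Sum.inl x) = Sum.inl (finSumFinEquiv (Sum.inl x)) := rfl

theorem proj_many (he : EqVarProj V) (p : ℕ) :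
    ∀ (r : ℕ) (Γ : List (L.Term (Fin p ⊕ Fin r) × L.Term (Fin p ⊕ Fin r))),
      ∃ ξ : List (L.Term (Fin p) × L.Term (Fin p)),
        (∀ A ∈ V, ∀ v : Fin p ⊕ Fin r → A.carrier,
          ConjHolds Γ v → ConjHolds ξ (v ∘ Sum.inl)) ∧
        ∀ ε : L.Term (Fin p) × L.Term (Fin p),
          (∀ A ∈ V, ∀ v : Fin p ⊕ Fin r → A.carrier,
            ConjHolds Γ v → EqHolds ε (v ∘ Sum.inl)) →
          Csq V ξ ε.1 ε.2 := by
  intro r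
  induction r with
  | zero =>
    intro Γ
    let h0 : Fin p ⊕ Fin 0 → Fin p := Sum.elim id Fin.elim0
    refine ⟨Γ.map fun e => (e.1.relabel h0, e.2.relabel h0), ?_, ?_⟩
    · intro A hA v hΓ
      rw [conjHolds_map_relabel]
      have hcomp : (v ∘ Sum.inl) ∘ h0 = v := funext fun x => by
        cases x with
        | inl a => rfl
        | inr i => exact i.elim0
      rw [hcomp]
      exact hΓ
    · intro ε hε A hA w hw
      rw [conjHolds_map_relabel] at hw
      exact hε A hA (w ∘ h0) hw
  | succ r ih =>
    intro Γ
    set ee := regroup p r with hee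
    set es := (finSumFinEquiv : (Fin p ⊕ Fin r) ≃ Fin (p + r)) with hes
    obtain ⟨ξ₁, h1, h2⟩ := he (p + r) (Γ.map fun e => (e.1.relabel ⇑ee, e.2.relabel ⇑ee))
    obtain ⟨ξ, hA1, hA2⟩ := ih (ξ₁.map fun e => (e.1.relabel ⇑es.symm, e.2.relabel ⇑es.symm))
    refine ⟨ξ, ?_, ?_⟩
    · intro A hA v hΓ
      have hφ : ConjHolds (Γ.map fun e => (e.1.relabel ⇑ee, e.2.relabel ⇑ee)) (v ∘ ⇑ee.symm) := by
        rw [conjHolds_map_relabel]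
        have : (v ∘ ⇑ee.symm) ∘ ⇑ee = v := funext fun x => congrArg v (ee.symm_apply_apply x)
        rwa [this]
      have hξ₁ := h1 A hA (v ∘ ⇑ee.symm) hφ
      have hΓ' : ConjHolds (ξ₁.map fun e => (e.1.relabel ⇑es.symm, e.2.relabel ⇑es.symm))
          (((v ∘ ⇑ee.symm) ∘ Sum.inl) ∘ ⇑es) := by
        rw [conjHolds_map_relabel]
        have : ((((v ∘ ⇑ee.symm) ∘ Sum.inl) ∘ ⇑es) ∘ ⇑es.symm) = (v ∘ ⇑ee.symm) ∘ Sum.inl :=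
          funext fun x => by simp
        rwa [this]
      have hfin := hA1 A hA _ hΓ'
      have : ((((v ∘ ⇑ee.symm) ∘ Sum.inl) ∘ ⇑es) ∘ Sum.inl) = v ∘ Sum.inl := by
        funext x
        show v (ee.symm (Sum.inl (es (Sum.inl x)))) = v (Sum.inl x)
        rw [← regroup_inl p r x, ← hee, ee.symm_apply_apply]
      rwa [this] at hfin
    · intro ε hε
      refine hA2 ε ?_
      intro A hA w' hw'
      rw [conjHolds_map_relabel] at hw'
      have hε₁ := h2 (ε.1.relabel fun x => es (Sum.inl x), ε.2.relabel fun x => es (Sum.inl x)) ?_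
      · have := hε₁ A hA (w' ∘ ⇑es.symm) hw'
        rw [eqHolds_relabel] at this
        have hco : ((w' ∘ ⇑es.symm) ∘ fun x => es (Sum.inl x)) = w' ∘ Sum.inl :=
          funext fun x => congrArg w' (es.symm_apply_apply (Sum.inl x))
        rwa [hco] at this
      · intro B hB u hφ
        rw [conjHolds_map_relabel] at hφ
        have hεv := hε B hB (u ∘ ⇑ee) hφ
        rw [eqHolds_relabel]
        have hco : ((u ∘ Sum.inl) ∘ fun x => es (Sum.inl x)) = (u ∘ ⇑ee) ∘ Sum.inl :=
          funext fun x => by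
            show u (Sum.inl (es (Sum.inl x))) = u (ee (Sum.inl x))
            rw [← regroup_inl p r x, ← hee]
        rwa [hco]
  
end ProjMany
section CohDir

variable {L : FirstOrder.Language.{u, u}} [L.IsAlgebraic] {V : Set (Alg L)}

theorem coherent_to_eqVarProj (hV : IsVariety V) (hco : Coherent V) : EqVarProj V := by
  classical
  intro n φ
  let eNU : Fin n ⊕ Unit → Fin (n + 1) := Sum.elim Fin.castSucc fun _ => Fin.last n
  let eUN : Fin (n + 1) → Fin n ⊕ Unit :=
    fun i => Fin.lastCases (Sum.inr ()) (fun j => Sum.inl j) i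
  have hUN : ∀ x, eUN (eNU x) = x := by
    rintro (a | ⟨⟩)
    · simp [eNU, eUN]
    · simp [eNU, eUN]
  have hUNc : ∀ i : Fin n, eUN (Fin.castSucc i) = Sum.inl i := fun i => by simp [eUN]
  set φ' := φ.map fun e => (e.1.relabel eNU, e.2.relabel eNU) with hφ'def
  set θA := congGen L (FreeAlg V (Fin (n + 1))) (imgE V φ') with hθA
  have hAV : Alg.mk (QuotAlg θA) ∈ V := quotAlg_mem hV (freeAlg_mem hV (Fin (n + 1))) θA
  have hfp : IsFinitelyPresentedIn V (QuotAlg θA) :=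
    ⟨n + 1, imgE V φ', imgE_finite φ', ⟨FirstOrder.Language.Equiv.refl L _⟩⟩
  let g : Fin n → QuotAlg θA := fun i => Quotient.mk θA.setoid (fmk V (Term.var (Fin.castSucc i)))
  set S := Substructure.closure L (Set.range g) with hS
  have hSFG : S.FG := Substructure.fg_closure (Set.finite_range g)
  obtain ⟨m, s', hs'fin, ⟨kS⟩⟩ := hco (Alg.mk (QuotAlg θA)) hAV hfp S hSFG
  obtain ⟨E', hE'⟩ := finite_eq_imgE hs'fin
  subst hE'
  let sb : FreeAlg V (Fin n) → FreeAlg V (Fin (n + 1)) :=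
    substF V fun i => Term.var (Fin.castSucc i)
  let ψ : Congruence L (FreeAlg V (Fin n)) :=
    Congruence.comap sb (substF_funMap _) θA
  have htrans : ∀ a b : L.Term (Fin n),
      Csq V φ' (a.relabel Fin.castSucc) (b.relabel Fin.castSucc) ↔
      ∀ A ∈ V, ∀ v : Fin n ⊕ Unit → A.carrier, ConjHolds φ v → EqHolds (a, b) (v ∘ Sum.inl) := by
    intro a b
    constructor
    · intro h A hA v hφv
      have h1 : ConjHolds φ' (v ∘ eUN) := by
        rw [hφ'def, conjHolds_map_relabel]
        have hc : ((v ∘ eUN) ∘ eNU) = v := funext fun x => congrArg v (hUN x)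
        rwa [hc]
      have h2 := h A hA (v ∘ eUN) h1
      rw [Term.realize_relabel, Term.realize_relabel] at h2
      have hc2 : ((v ∘ eUN) ∘ Fin.castSucc) = v ∘ Sum.inl :=
        funext fun i => congrArg v (hUNc i)
      rw [hc2] at h2
      exact h2
    · intro h A hA v hφv'
      rw [hφ'def, conjHolds_map_relabel] at hφv'
      have h2 := h A hA (v ∘ eNU) hφv'
      show Term.realize v (a.relabel Fin.castSucc) = Term.realize v (b.relabel Fin.castSucc)
      rw [Term.realize_relabel, Term.realize_relabel]
      exact h2
  have hψ : ∀ a b : L.Term (Fin n), ψ.rel (fmk V a) (fmk V b) ↔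
      ∀ A ∈ V, ∀ v : Fin n ⊕ Unit → A.carrier, ConjHolds φ v → EqHolds (a, b) (v ∘ Sum.inl) := by
    intro a b
    have h1 : ψ.rel (fmk V a) (fmk V b) ↔
        θA.rel (fmk V (a.relabel Fin.castSucc)) (fmk V (b.relabel Fin.castSucc)) := by
      show θA.rel (sb (fmk V a)) (sb (fmk V b)) ↔ _
      rw [show sb (fmk V a) = fmk V (a.subst fun i => Term.var (Fin.castSucc i)) from rfl,
        show sb (fmk V b) = fmk V (b.subst fun i => Term.var (Fin.castSucc i)) from rfl,
        subst_var_comp, subst_var_comp]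
    rw [h1, hθA, congGen_imgE_iff hV φ']
    exact htrans a b
  let f : FreeAlg V (Fin n) → QuotAlg θA := fun x => Quotient.mk θA.setoid (sb x)
  have hffun : ∀ {k : ℕ} (gf : L.Functions k) (x : Fin k → FreeAlg V (Fin n)),
      f (funMap gf x) = funMap gf (f ∘ x) := by
    intro k gf x
    show Quotient.mk θA.setoid (sb (funMap gf x)) = _
    rw [show sb (funMap gf x) = funMap gf (sb ∘ x) from substF_funMap _ gf x]
    exact (quot_funMap θA gf (sb ∘ x)).symm
  have hfr : ∀ c : L.Term (Fin n), f (fmk V c) = c.realize g := by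
    intro c
    show Quotient.mk θA.setoid (sb (fmk V c)) = _
    rw [show sb (fmk V c) = fmk V (c.subst fun i => Term.var (Fin.castSucc i)) from rfl,
      ← realize_mk_fmk θA (fun i => Term.var (Fin.castSucc i)) c]
  have hmem : ∀ x, f x ∈ S := by
    intro x
    rw [← Quotient.out_eq x]
    rw [show (Quotient.mk (varietyCong V (Fin n)).setoid x.out) = fmk V x.out from rfl, hfr x.out]
    exact Term.realize_mem _ g fun i => Substructure.subset_closure (Set.mem_range_self i)
  have hsurj : ∀ y : ↥S, ∃ x, f x = (y : QuotAlg θA) := by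
    intro y
    have hy : (y : QuotAlg θA) ∈ Substructure.closure L (Set.range g) := y.2
    obtain ⟨t, ht⟩ := Substructure.mem_closure_iff_exists_term.1 hy
    let ρ : ↥(Set.range g) → Fin n := fun z => Classical.choose z.2
    have hρ : ∀ z : ↥(Set.range g), g (ρ z) = (z : QuotAlg θA) :=
      fun z => Classical.choose_spec z.2
    refine ⟨fmk V (t.relabel ρ), ?_⟩
    rw [hfr, Term.realize_relabel,
      show (g ∘ ρ) = (fun z : ↥(Set.range g) => (z : QuotAlg θA)) from funext hρ]
    exact ht
  let iso1 : QuotAlg ψ ≃[L] ↥S :=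
    quotEquivOfHom f hffun ψ
      (fun x y => by
        constructor
        · intro h
          exact Quotient.sound (s := θA.setoid) h
        · intro h
          exact Quotient.exact (s := θA.setoid) h)
      S hmem hsurj
  let kk := kS.comp iso1
  obtain ⟨E, hE⟩ := presentation_transfer hV ψ E' kk (List.finRange n)
    fun a => List.mem_finRange a
  refine ⟨E, ?_, ?_⟩
  · intro A hA v hφv e heE
    have h1 : (congGen L (FreeAlg V (Fin n)) (imgE V E)).rel (fmk V e.1) (fmk V e.2) :=
      congGen_mem (mem_imgE heE)
    have h2 : ψ.rel (fmk V e.1) (fmk V e.2) := (hE _ _).2 h1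
    exact ((hψ e.1 e.2).1 h2) A hA v hφv
  · intro ε hyp A hA v hv
    have h2 : ψ.rel (fmk V ε.1) (fmk V ε.2) := (hψ ε.1 ε.2).2 hyp
    have h3 := (hE _ _).1 h2
    exact (congGen_imgE_iff hV E ε.1 ε.2).1 h3 A hA v hv

end CohDir
section CohDir2

variable {L : FirstOrder.Language.{u, u}} [L.IsAlgebraic] {V : Set (Alg L)}

theorem eqVarProj_to_coherent (hV : IsVariety V) (he : EqVarProj V) : Coherent V := by
  classical
  rintro A hA ⟨nn, s, hsfin, ⟨j⟩⟩ S hSFG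
  obtain ⟨E, rfl⟩ := finite_eq_imgE hsfin
  set θB := congGen L (FreeAlg V (Fin nn)) (imgE V E) with hθB
  obtain ⟨t0, ht0⟩ := hSFG
  set m := t0.card with hm
  let a : Fin m → A.carrier := fun i => ((t0.equivFin.symm i : { x // x ∈ t0 }) : A.carrier)
  have hrange : Set.range a = ↑t0 := by
    ext x
    constructor
    · rintro ⟨i, rfl⟩
      exact (t0.equivFin.symm i).2
    · intro hx
      exact ⟨t0.equivFin ⟨x, hx⟩, by simp [a]⟩
  have hSa : Substructure.closure L (Set.range a) = S := by rw [hrange]; exact ht0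
  let w : Fin m → L.Term (Fin nn) := fun k_ => ((j (a k_)).out).out
  have hw : ∀ k_, Quotient.mk θB.setoid (fmk V (w k_)) = j (a k_) := fun k_ => by
    show Quotient.mk θB.setoid (Quotient.mk (varietyCong V (Fin nn)).setoid _) = _
    rw [Quotient.out_eq, Quotient.out_eq]
  set Γ : List (L.Term (Fin m ⊕ Fin nn) × L.Term (Fin m ⊕ Fin nn)) :=
    (E.map fun e => (e.1.relabel Sum.inr, e.2.relabel Sum.inr)) ++
      ((List.finRange m).map fun k_ => (Term.var (Sum.inl k_), (w k_).relabel Sum.inr))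
    with hΓdef
  have K1 : ∀ c d : L.Term (Fin m),
      (∀ B ∈ V, ∀ v : Fin m ⊕ Fin nn → B.carrier,
        ConjHolds Γ v → c.realize (v ∘ Sum.inl) = d.realize (v ∘ Sum.inl)) ↔
      Csq V E (c.subst w) (d.subst w) := by
    intro c d
    constructor
    · intro hh B hB v hE
      have hΓh : ConjHolds Γ (Sum.elim (fun k_ => (w k_).realize v) v) := by
        rw [hΓdef, conjHolds_append]
        constructor
        · rw [conjHolds_map_relabel]
          exact hE
        · intro e heq
          obtain ⟨k_, _, rfl⟩ := List.mem_map.1 heq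
          show Term.realize (Sum.elim (fun k_ => (w k_).realize v) v) (Term.var (Sum.inl k_)) =
            Term.realize (Sum.elim (fun k_ => (w k_).realize v) v) ((w k_).relabel Sum.inr)
          rw [Term.realize_relabel]
          rfl
      have hres := hh B hB _ hΓh
      rw [Term.realize_subst, Term.realize_subst]
      exact hres
    · intro hh B hB v hΓh
      rw [hΓdef, conjHolds_append] at hΓh
      obtain ⟨hΓ1, hΓ2⟩ := hΓh
      rw [conjHolds_map_relabel] at hΓ1
      have h2 : ∀ k_, v (Sum.inl k_) = (w k_).realize (v ∘ Sum.inr) := by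
        intro k_
        have h3 : Term.realize v (Term.var (Sum.inl k_)) =
            Term.realize v ((w k_).relabel Sum.inr) :=
          hΓ2 _ (List.mem_map.2 ⟨k_, List.mem_finRange k_, rfl⟩)
        rw [Term.realize_relabel] at h3
        exact h3
      have hcd := hh B hB (v ∘ Sum.inr) hΓ1
      rw [Term.realize_subst, Term.realize_subst] at hcd
      show Term.realize (v ∘ Sum.inl) c = Term.realize (v ∘ Sum.inl) d
      rw [show (v ∘ Sum.inl) = fun k_ => (w k_).realize (v ∘ Sum.inr) from funext h2]
      exact hcd
  have hj : ∀ c : L.Term (Fin m),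
      j (c.realize a) = Quotient.mk θB.setoid (fmk V (c.subst w)) := by
    intro c
    calc j (Term.realize a c) = Term.realize (⇑j ∘ a) c :=
          (FirstOrder.Language.HomClass.realize_term j).symm
      _ = Term.realize (fun k_ => Quotient.mk θB.setoid (fmk V (w k_))) c := by
          rw [show (⇑j ∘ a) = fun k_ => Quotient.mk θB.setoid (fmk V (w k_)) from
            funext fun k_ => (hw k_).symm]
      _ = Quotient.mk θB.setoid (fmk V (c.subst w)) := realize_mk_fmk θB w c
  have K2 : ∀ c d : L.Term (Fin m),
      c.realize a = d.realize a ↔ Csq V E (c.subst w) (d.subst w) := by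
    intro c d
    constructor
    · intro hcd
      have hq := congrArg j hcd
      rw [hj, hj] at hq
      exact (congGen_imgE_iff hV E _ _).1 (Quotient.exact (s := θB.setoid) hq)
    · intro hcs
      have h1 : Quotient.mk θB.setoid (fmk V (c.subst w)) =
          Quotient.mk θB.setoid (fmk V (d.subst w)) :=
        Quotient.sound (s := θB.setoid) ((congGen_imgE_iff hV E _ _).2 hcs)
      rw [← hj, ← hj] at h1
      exact j.injective h1
  obtain ⟨ξ, hξ1, hξ2⟩ := proj_many he m nn Γ
  let vA : Fin m ⊕ Fin nn → A.carrier :=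
    Sum.elim a fun i => j.symm (Quotient.mk θB.setoid (fmk V (Term.var i)))
  have hjs : ∀ t : L.Term (Fin nn),
      t.realize (vA ∘ Sum.inr) = j.symm (Quotient.mk θB.setoid (fmk V t)) := by
    intro t
    calc t.realize (vA ∘ Sum.inr)
        = t.realize (⇑j.symm ∘ fun i => Quotient.mk θB.setoid (fmk V (Term.var i))) := rfl
      _ = j.symm (t.realize fun i => Quotient.mk θB.setoid (fmk V (Term.var i))) :=
          FirstOrder.Language.HomClass.realize_term _
      _ = j.symm (Quotient.mk θB.setoid (fmk V (t.subst Term.var))) := by rw [realize_mk_fmk]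
      _ = _ := by rw [subst_var]
  have hΓA : ConjHolds Γ vA := by
    rw [hΓdef, conjHolds_append]
    constructor
    · rw [conjHolds_map_relabel]
      intro e heE
      show Term.realize (vA ∘ Sum.inr) e.1 = Term.realize (vA ∘ Sum.inr) e.2
      rw [hjs, hjs]
      exact congrArg j.symm (Quotient.sound (s := θB.setoid) (congGen_mem (mem_imgE heE)))
    · intro e heq
      obtain ⟨k_, _, rfl⟩ := List.mem_map.1 heq
      show Term.realize vA (Term.var (Sum.inl k_)) = Term.realize vA ((w k_).relabel Sum.inr)
      rw [Term.realize_relabel]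
      show a k_ = Term.realize (vA ∘ Sum.inr) (w k_)
      rw [hjs, hw]
      exact (j.symm_apply_apply (a k_)).symm
  have hξA : ConjHolds ξ a := hξ1 A hA vA hΓA
  have hmain : ∀ c d : L.Term (Fin m),
      c.realize a = d.realize a ↔
      (congGen L (FreeAlg V (Fin m)) (imgE V ξ)).rel (fmk V c) (fmk V d) := by
    intro c d
    constructor
    · intro h
      exact (congGen_imgE_iff hV ξ c d).2 (hξ2 (c, d) ((K1 c d).2 ((K2 c d).1 h)))
    · intro h
      exact (congGen_imgE_iff hV ξ c d).1 h A hA a hξA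
  let θS : Congruence L (FreeAlg V (Fin m)) := kerCong (evalF A hA a) (evalF_funMap A hA a)
  have hiff : ∀ x y : FreeAlg V (Fin m),
      θS.rel x y ↔ (congGen L (FreeAlg V (Fin m)) (imgE V ξ)).rel x y := by
    intro x y
    rw [← Quotient.out_eq x, ← Quotient.out_eq y]
    exact hmain x.out y.out
  have hmem : ∀ x, evalF A hA a x ∈ S := by
    intro x
    rw [← hSa, ← Quotient.out_eq x]
    exact Term.realize_mem _ a fun i => Substructure.subset_closure (Set.mem_range_self i)
  have hsurj : ∀ y : ↥S, ∃ x, evalF A hA a x = (y : A.carrier) := by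
    intro y
    have hy : (y : A.carrier) ∈ Substructure.closure L (Set.range a) := by
      rw [hSa]; exact y.2
    obtain ⟨t, ht⟩ := Substructure.mem_closure_iff_exists_term.1 hy
    let ρ : ↥(Set.range a) → Fin m := fun z => Classical.choose z.2
    have hρ : ∀ z : ↥(Set.range a), a (ρ z) = (z : A.carrier) :=
      fun z => Classical.choose_spec z.2
    refine ⟨fmk V (t.relabel ρ), ?_⟩
    show (t.relabel ρ).realize a = _
    rw [Term.realize_relabel,
      show (a ∘ ρ) = (fun z : ↥(Set.range a) => (z : A.carrier)) from funext hρ]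
    exact ht
  let iso1 : QuotAlg θS ≃[L] ↥S :=
    quotEquivOfHom (evalF A hA a) (evalF_funMap A hA a) θS (fun _ _ => Iff.rfl) S hmem hsurj
  exact ⟨m, imgE V ξ, imgE_finite ξ, ⟨(quotEquivOfRelIff θS _ hiff).comp iso1.symm⟩⟩

end CohDir2

/-- Proposition 2.3. For any variety `V` of algebras over an algebraic
first-order language `L`, the following are equivalent: (1) `V` is coherent; (2) `V` has the
equational variable projection property; (3) `V` has the variable projection property. -/
theorem coherent_iff_eqVarProj_iff_varProj
    (L : FirstOrder.Language.{u, u}) [L.IsAlgebraic] (hc : Nonempty L.Constants)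
    (V : Set (Alg L)) (hV : IsVariety V) :
    (Coherent V ↔ EqVarProj V) ∧ (EqVarProj V ↔ VarProj V) := by
  exact ⟨⟨coherent_to_eqVarProj hV, eqVarProj_to_coherent hV⟩,
    ⟨eqVarProj_to_varProj, varProj_to_eqVarProj hV⟩⟩

end Paper
end

section
/- Let K be a universal class of algebras over an algebraic first-order language L. If the first-order theory of K has a model completion, then K has the variable projection property. -/
namespace Paper

open FirstOrder FirstOrder.Language FirstOrder.Language.Structure

universe u

variable {L : FirstOrder.Language.{u, u}}

/-! ### Auxiliary definitions and lemmas -/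

section AuxSyntax

open BoundedFormula

universe u₁ v₁ u₂ v₂ w₁ w₂

theorem aux_isQF_mapTermRel {L₁ : FirstOrder.Language.{u₁, v₁}} {L₂ : FirstOrder.Language.{u₂, v₂}}
    {α' : Type*} {β' : Type*} {g : ℕ → ℕ}
    {ft : ∀ n, L₁.Term (α' ⊕ Fin n) → L₂.Term (β' ⊕ Fin (g n))}
    {fr : ∀ n, L₁.Relations n → L₂.Relations n}
    {h : ∀ n, L₂.BoundedFormula β' (g (n + 1)) → L₂.BoundedFormula β' (g n + 1)}
    {n : ℕ} {φ : L₁.BoundedFormula α' n} (hφ : φ.IsQF) :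
    (φ.mapTermRel ft fr h).IsQF := by
  induction hφ with
  | falsum => exact isQF_bot
  | of_isAtomic h0 =>
    cases h0 with
    | equal t₁ t₂ => exact (IsAtomic.equal _ _).isQF
    | rel R ts => exact (IsAtomic.rel _ _).isQF
  | imp _ _ ih₁ ih₂ => exact ih₁.imp ih₂

theorem aux_isQF_subst {L₁ : FirstOrder.Language.{u₁, v₁}} {β γ : Type*} {k : ℕ}
    {φ : L₁.BoundedFormula β k} (h : φ.IsQF) (f : β → L₁.Term γ) :
    (φ.subst f).IsQF :=
  aux_isQF_mapTermRel h

theorem aux_isQF_equivSentence_symm {α' : Type u} {δ : (L[[α']]).Sentence} (h : δ.IsQF) :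
    ((Formula.equivSentence.symm δ : L.Formula α')).IsQF :=
  aux_isQF_mapTermRel (aux_isQF_mapTermRel h)

theorem aux_isQF_formula_relabel {β γ : Type*} {ψ : L.Formula β} (h : ψ.IsQF) (f : β → γ) :
    (ψ.relabel f).IsQF :=
  h.relabel _

/-- Quantifier-free formulas transfer along embeddings. -/
theorem aux_realize_embedding_qf {L₁ : FirstOrder.Language.{u₁, v₁}} {M : Type w₁} {N : Type w₂}
    [L₁.Structure M] [L₁.Structure N] (g : M ↪[L₁] N) {β : Type*} {k : ℕ}
    {φ : L₁.BoundedFormula β k} (h : φ.IsQF) {v : β → M} {xs : Fin k → M} :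
    φ.Realize (⇑g ∘ v) (⇑g ∘ xs) ↔ φ.Realize v xs := by
  induction h with
  | falsum => exact Iff.rfl
  | of_isAtomic h0 =>
    cases h0 with
    | equal t₁ t₂ =>
      have hterm : ∀ t : L₁.Term (β ⊕ Fin k),
          t.realize (Sum.elim (⇑g ∘ v) (⇑g ∘ xs)) = g (t.realize (Sum.elim v xs)) := by
        intro t
        rw [← Sum.comp_elim, HomClass.realize_term]
      simp only [realize_bdEqual, hterm]
      exact g.injective.eq_iff
    | rel R ts =>
      have hterm : ∀ t : L₁.Term (β ⊕ Fin k),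
          t.realize (Sum.elim (⇑g ∘ v) (⇑g ∘ xs)) = g (t.realize (Sum.elim v xs)) := by
        intro t
        rw [← Sum.comp_elim, HomClass.realize_term]
      simp only [realize_rel, hterm]
      exact StrongHomClass.map_rel g R _
  | imp _ _ ih₁ ih₂ => simp only [realize_imp, ih₁, ih₂]

theorem aux_realize_embedding_qf_formula {L₁ : FirstOrder.Language.{u₁, v₁}} {M : Type w₁}
    {N : Type w₂} [L₁.Structure M] [L₁.Structure N] (g : M ↪[L₁] N) {β : Type*}
    {φ : L₁.Formula β} (h : φ.IsQF) {v : β → M} :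
    φ.Realize (⇑g ∘ v) ↔ φ.Realize v := by
  have h1 := aux_realize_embedding_qf g h (v := v) (xs := (default : Fin 0 → M))
  rwa [Subsingleton.elim (⇑g ∘ (default : Fin 0 → M)) (default : Fin 0 → N)] at h1

theorem aux_realize_formula_subst {L₁ : FirstOrder.Language.{u₁, v₁}} {M : Type w₁}
    [L₁.Structure M] {β γ : Type*} {ψ : L₁.Formula β} {tf : β → L₁.Term γ} {v : γ → M} :
    Formula.Realize (ψ.subst tf) v ↔ ψ.Realize fun m => (tf m).realize v :=
  BoundedFormula.realize_subst

end AuxSyntax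

section AuxConj

open BoundedFormula

variable {α : Type}

/-- Conjunction of a list of equations as a formula. -/
def conjForm : List (L.Term α × L.Term α) → L.Formula α
  | [] => ⊤
  | ε :: l => (ε.1.equal ε.2) ⊓ conjForm l

theorem conjForm_isQF : ∀ l : List (L.Term α × L.Term α), (conjForm l).IsQF
  | [] => IsQF.top
  | _ :: l => (IsQF.of_isAtomic (IsAtomic.equal _ _)).inf (conjForm_isQF l)

theorem realize_conjForm {M : Type u} [L.Structure M] {l : List (L.Term α × L.Term α)}
    {v : α → M} : (conjForm l).Realize v ↔ ConjHolds l v := by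
  induction l with
  | nil => simp [conjForm, ConjHolds, Formula.realize_top]
  | cons ε l ih =>
    simp [conjForm, ConjHolds, EqHolds, Formula.realize_inf, Formula.realize_equal, ih,
      List.forall_mem_cons]

/-- Whether a literal (equation or negated equation) holds. -/
def LitHolds {M : Type u} [L.Structure M] (p : (L.Term α × L.Term α) × Bool) (v : α → M) : Prop :=
  if p.2 then EqHolds p.1 v else ¬EqHolds p.1 v

/-- A literal as a formula. -/
def litForm (p : (L.Term α × L.Term α) × Bool) : L.Formula α :=
  if p.2 then p.1.1.equal p.1.2 else (p.1.1.equal p.1.2).not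

theorem litForm_isQF (p : (L.Term α × L.Term α) × Bool) : (litForm (L := L) p).IsQF := by
  unfold litForm
  split
  · exact IsQF.of_isAtomic (IsAtomic.equal _ _)
  · exact (IsQF.of_isAtomic (IsAtomic.equal _ _)).not

theorem realize_litForm {M : Type u} [L.Structure M] {p : (L.Term α × L.Term α) × Bool}
    {v : α → M} : (litForm p).Realize v ↔ LitHolds p v := by
  unfold litForm LitHolds
  split
  · rw [Formula.realize_equal]; exact Iff.rfl
  · rw [Formula.realize_not, Formula.realize_equal]; exact Iff.rfl

/-- Conjunction of a list of literals as a formula. -/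
def litsForm : List ((L.Term α × L.Term α) × Bool) → L.Formula α
  | [] => ⊤
  | p :: l => litForm p ⊓ litsForm l

theorem litsForm_isQF : ∀ l : List ((L.Term α × L.Term α) × Bool), (litsForm (L := L) l).IsQF
  | [] => IsQF.top
  | p :: l => (litForm_isQF p).inf (litsForm_isQF l)

theorem realize_litsForm {M : Type u} [L.Structure M] :
    ∀ {l : List ((L.Term α × L.Term α) × Bool)} {v : α → M},
      (litsForm l).Realize v ↔ ∀ p ∈ l, LitHolds p v := by
  intro l v
  induction l with
  | nil => simp [litsForm, Formula.realize_top]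
  | cons p l ih =>
    simp only [litsForm, Formula.realize_inf, ih, List.forall_mem_cons, realize_litForm]

/-- Conjunction of a list of formulas. -/
def listInf : List (L.Formula α) → L.Formula α
  | [] => ⊤
  | ψ :: l => ψ ⊓ listInf l

theorem listInf_isQF : ∀ l : List (L.Formula α), (∀ ψ ∈ l, ψ.IsQF) → (listInf l).IsQF
  | [], _ => IsQF.top
  | ψ :: l, h =>
    (h ψ List.mem_cons_self).inf
      (listInf_isQF l fun ψ' h' => h ψ' (List.mem_cons_of_mem _ h'))

theorem realize_listInf {M : Type u} [L.Structure M] :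
    ∀ {l : List (L.Formula α)} {v : α → M}, (listInf l).Realize v ↔ ∀ ψ ∈ l, ψ.Realize v := by
  intro l v
  induction l with
  | nil => simp [listInf, Formula.realize_top]
  | cons ψ l ih => simp only [listInf, Formula.realize_inf, ih, List.forall_mem_cons]

end AuxConj

section AuxUniv

open BoundedFormula

/-- Universal closure of a formula with finitely many free variables. -/
noncomputable def univClosure {α : Type} [Finite α] (ψ : L.Formula α) : L.Sentence :=
  Formula.iAlls α (ψ.relabel (Sum.inr : α → Empty ⊕ α))

theorem isUniversal_univClosure {α : Type} [Finite α] {ψ : L.Formula α} (h : ψ.IsQF) :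
    IsUniversalSentence (univClosure ψ) := by
  unfold univClosure Formula.iAlls
  exact ⟨_, _, IsQF.relabel (IsQF.relabel h _) _, rfl⟩

theorem realize_univClosure {α : Type} [Finite α] {M : Type u} [L.Structure M]
    {ψ : L.Formula α} : (M ⊨ univClosure ψ) ↔ ∀ v : α → M, ψ.Realize v := by
  unfold univClosure
  rw [Sentence.Realize, Formula.realize_iAlls]
  simp only [Formula.realize_relabel]
  exact ⟨fun h v => h v, fun h v => h v⟩

/-- Universal quantifier-free consequences of `K` transfer to models of a cotheory of
`theoryOf K`. -/
theorem entails_cotheory_univ {K : Set (Alg L)} {T' : L.Theory}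
    (hcot : AreCotheories (theoryOf K) T') {α : Type} [Finite α] {ψ : L.Formula α}
    (hQF : ψ.IsQF) (hKψ : ∀ A ∈ K, ∀ v : α → A.carrier, ψ.Realize v)
    (B : Type u) [L.Structure B] [Nonempty B] (hB : B ⊨ T') : ∀ v : α → B, ψ.Realize v := by
  have hmem : univClosure ψ ∈ theoryOf K := fun A hA => realize_univClosure.2 (hKψ A hA)
  have hent : Entails (theoryOf K) (univClosure ψ) := fun M _ _ hM => (Theory.model_iff _).1 hM _ hmem
  have hT' : Entails T' (univClosure ψ) := (hcot _ (isUniversal_univClosure hQF)).1 hent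
  exact realize_univClosure.1 (hT' B hB)

end AuxUniv

section AuxDiagram

open BoundedFormula Substructure

theorem exists_term_of_mem_closure {M : Type u} [L.Structure M] {n : ℕ} {a : Fin n → M} {x : M}
    (hx : x ∈ closure L (Set.range a)) : ∃ t : L.Term (Fin n), t.realize a = x := by
  rw [mem_closure_iff_exists_term] at hx
  obtain ⟨t, ht⟩ := hx
  refine ⟨t.relabel fun y => y.2.choose, ?_⟩
  rw [Term.realize_relabel, ← ht]
  congr 1
  funext y
  exact y.2.choose_spec

/-- A model containing a substructure models the substructure's quantifier-free diagram. -/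
theorem models_diagram_of_substructure [L.IsAlgebraic] {M : Type u} [L.Structure M]
    (S : L.Substructure M) :
    ∀ δ ∈ diagram L (↥S : Type u),
      @Sentence.Realize _ M
        (@Language.withConstantsStructure L M _ (↥S : Type u)
          (constantsOn.structure ((↑) : ↥S → M))) δ := by
  letI : (constantsOn (↥S : Type u)).Structure M := constantsOn.structure ((↑) : ↥S → M)
  haveI hre : ∀ k, IsEmpty ((L[[(↥S : Type u)]]).Relations k) := fun k =>
    ⟨fun r => by cases r with
      | inl r => exact IsEmpty.false r
      | inr r => exact r.elim⟩
  let g : (↥S : Type u) ↪[L[[(↥S : Type u)]]] M :=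
    { toFun := ((↑) : ↥S → M)
      inj' := Subtype.coe_injective
      map_fun' := by
        intro k f x
        rcases f with f | c
        · exact S.subtype.map_fun' f x
        · cases k with
          | zero => rfl
          | succ k => exact isEmptyElim c
      map_rel' := fun {k} r x => isEmptyElim r }
  intro δ hδ
  obtain ⟨hQF, hSδ⟩ := hδ
  have h := (aux_realize_embedding_qf g hQF (v := (default : Empty → ↥S))
    (xs := (default : Fin 0 → ↥S))).2 hSδ
  rwa [Subsingleton.elim (⇑g ∘ (default : Empty → ↥S)) (default : Empty → M),
    Subsingleton.elim (⇑g ∘ (default : Fin 0 → ↥S)) (default : Fin 0 → M)] at h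

end AuxDiagram

section AuxSat

theorem exists_unsat_finset {L₂ : FirstOrder.Language.{u, u}} {Th : L₂.Theory}
    (h : ¬Th.IsSatisfiable) :
    ∃ T0 : Finset L₂.Sentence, ↑T0 ⊆ Th ∧ ¬Theory.IsSatisfiable (↑T0 : L₂.Theory) := by
  by_contra hcon
  push_neg at hcon
  exact h (Theory.isSatisfiable_iff_isFinitelySatisfiable.2 fun T0 hT0 => hcon T0 hT0)

theorem not_isSatisfiable_union_not {L₂ : FirstOrder.Language.{u, u}} {Th : L₂.Theory}
    {s : L₂.Sentence} (h : Th ⊨ᵇ s.not) : ¬(Th ∪ {s}).IsSatisfiable := by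
  rintro ⟨Mo⟩
  haveI : Mo.Carrier ⊨ Th := Mo.is_model.mono Set.subset_union_left
  have h1 : Mo.Carrier ⊨ s :=
    Theory.realize_sentence_of_mem (T := Th ∪ {s}) (Set.mem_union_right _ rfl)
  have h2 := h.realize_sentence Mo.Carrier
  exact (Sentence.realize_not _).1 h2 h1

end AuxSat

section AuxEmbed

/-- Every member of `K` embeds into a model of `T'`. -/
theorem exists_extension_model [L.IsAlgebraic] (hc : Nonempty L.Constants) {K : Set (Alg L)}
    {T' : L.Theory}
    (hcompl : ∀ (M : Type u) [L.Structure M] [Nonempty M], M ⊨ theoryOf K →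
      Theory.IsComplete ((L.lhomWithConstants M).onTheory T' ∪ diagram L M))
    {A : Alg L} (hA : A ∈ K) :
    ∃ B : Alg L, Nonempty B.carrier ∧ B.carrier ⊨ T' ∧ Nonempty (A.carrier ↪[L] B.carrier) := by
  haveI : Nonempty A.carrier := ⟨((hc.some : L.Constants) : A.carrier)⟩
  have hmodel : A.carrier ⊨ theoryOf K := (Theory.model_iff _).2 fun s hs => hs A hA
  obtain ⟨Mo⟩ := (hcompl A.carrier hmodel).1
  letI : L.Structure Mo.Carrier := (L.lhomWithConstants A.carrier).reduct Mo.Carrier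
  haveI : Nonempty Mo.Carrier := Mo.nonempty'
  have hmodU : Mo.Carrier ⊨ (L.lhomWithConstants A.carrier).onTheory T' ∪ diagram L A.carrier :=
    Mo.is_model
  haveI : (L.lhomWithConstants A.carrier).IsExpansionOn Mo.Carrier :=
    LHom.isExpansionOn_reduct (L.lhomWithConstants A.carrier) Mo.Carrier
  have hBT : Mo.Carrier ⊨ T' :=
    (LHom.onTheory_model (M := Mo.Carrier) (L.lhomWithConstants A.carrier)
      T').1 (hmodU.mono Set.subset_union_left)
  have hdiag : ∀ δ ∈ diagram L A.carrier, Mo.Carrier ⊨ δ := fun δ hδ =>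
    (Theory.model_iff _).1 (hmodU.mono Set.subset_union_right) δ hδ
  refine ⟨Alg.mk Mo.Carrier, ⟨Classical.arbitrary _⟩, hBT, ⟨?_⟩⟩
  refine
    { toFun := fun a => ((L.con a : (L[[A.carrier]]).Constants) : Mo.Carrier)
      inj' := ?_
      map_fun' := ?_
      map_rel' := fun {k} r x => isEmptyElim r }
  · intro a b hab
    by_contra hne
    have hmem : (Formula.not ((L.con a).term.equal (L.con b).term)) ∈ diagram L A.carrier := by
      refine ⟨(BoundedFormula.IsQF.of_isAtomic (BoundedFormula.IsAtomic.equal _ _)).not, ?_⟩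
      rw [Sentence.Realize, Formula.realize_not, Formula.realize_equal,
        Term.realize_constants, Term.realize_constants]
      exact hne
    have := hdiag _ hmem
    rw [Sentence.Realize, Formula.realize_not, Formula.realize_equal,
      Term.realize_constants, Term.realize_constants] at this
    exact this hab
  · intro k f x
    have hmem : ((Term.func (Sum.inl f : (L[[A.carrier]]).Functions k)
        (fun i => (L.con (x i)).term)).equal (L.con (funMap f x)).term) ∈
        diagram L A.carrier := by
      refine ⟨BoundedFormula.IsQF.of_isAtomic (BoundedFormula.IsAtomic.equal _ _), ?_⟩
      rw [Sentence.Realize, Formula.realize_equal, Term.realize_constants]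
      simp only [Term.realize]
      rfl
    have := hdiag _ hmem
    rw [Sentence.Realize, Formula.realize_equal, Term.realize_constants] at this
    show ((L.con (funMap f x) : (L[[A.carrier]]).Constants) : Mo.Carrier)
      = funMap f fun i => ((L.con (x i) : (L[[A.carrier]]).Constants) : Mo.Carrier)
    rw [← this]
    have harg : (fun i => Term.realize (default : Empty → Mo.Carrier) ((L.con (x i)).term))
        = fun i => ((L.con (x i) : (L[[A.carrier]]).Constants) : Mo.Carrier) := by
      funext i
      exact Term.realize_constants
    show @funMap (L[[A.carrier]]) Mo.Carrier _ k (Sum.inl f)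
        (fun i => Term.realize (default : Empty → Mo.Carrier) ((L.con (x i)).term))
      = @funMap (L[[A.carrier]]) Mo.Carrier _ k (Sum.inl f)
        (fun i => ((L.con (x i) : (L[[A.carrier]]).Constants) : Mo.Carrier))
    rw [harg]

end AuxEmbed

section AuxClosure

open Substructure

/-- In any model of a cotheory of `theoryOf K`, finitely generated substructures are
(isomorphic to) members of `K`. -/
theorem closure_mem_of_models [L.IsAlgebraic] {K : Set (Alg L)} (hK : IsUniversalClass K)
    {T' : L.Theory} (hcot : AreCotheories (theoryOf K) T')
    {B : Type u} [L.Structure B] [Nonempty B] (hB : B ⊨ T') {n : ℕ} (a : Fin n → B) :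
    Alg.mk (↥(closure L (Set.range a)) : Type u) ∈ K := by
  classical
  -- realizability in K of every finite set of literal facts true of `a` in `B`
  have hreal : ∀ i : Finset {p : (L.Term (Fin n) × L.Term (Fin n)) × Bool // LitHolds p a},
      ∃ A : Alg L, A ∈ K ∧ ∃ v : Fin n → A.carrier, ∀ p, p ∈ i → LitHolds p.1 v := by
    intro i
    by_contra hcon
    push_neg at hcon
    have hKψ : ∀ A ∈ K, ∀ v : Fin n → A.carrier,
        ((litsForm (i.toList.map Subtype.val)).not).Realize v := by
      intro A hA v
      rw [Formula.realize_not, realize_litsForm]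
      intro hall
      obtain ⟨p, hpi, hnp⟩ := hcon A hA v
      exact hnp (hall p.1 (List.mem_map_of_mem (Finset.mem_toList.2 hpi)))
    have hBall := entails_cotheory_univ hcot ((litsForm_isQF _).not) hKψ B hB a
    rw [Formula.realize_not, realize_litsForm] at hBall
    refine hBall fun p hp => ?_
    obtain ⟨q, _, rfl⟩ := List.mem_map.1 hp
    exact q.2
  choose Af hAf vf hvf using hreal
  letI : ∀ i : Finset {p : (L.Term (Fin n) × L.Term (Fin n)) × Bool // LitHolds p a},
      L.Structure ((Af i).carrier) := fun i => (Af i).str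
  haveI : Nonempty (Finset {p : (L.Term (Fin n) × L.Term (Fin n)) × Bool // LitHolds p a}) := ⟨∅⟩
  let U : Ultrafilter (Finset {p : (L.Term (Fin n) × L.Term (Fin n)) × Bool // LitHolds p a}) :=
    Ultrafilter.of Filter.atTop
  have hU : ∀ i : Finset {p : (L.Term (Fin n) × L.Term (Fin n)) × Bool // LitHolds p a},
      {j | i ≤ j} ∈ U := fun i =>
    Filter.le_def.1 (Ultrafilter.of_le Filter.atTop) _ (Filter.mem_atTop i)
  have hPK : Alg.mk ((U : Filter (Finset {p : (L.Term (Fin n) × L.Term (Fin n)) × Bool //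
      LitHolds p a})).Product fun i => (Af i).carrier) ∈ K :=
    hK.2.2 _ U _ fun i => show Alg.mk (Af i).carrier ∈ K from hAf i
  let e : Fin n → ((U : Filter (Finset {p : (L.Term (Fin n) × L.Term (Fin n)) × Bool // LitHolds p a})).Product fun i => (Af i).carrier) := fun j =>
    (↑(fun i => vf i j) : (U : Filter (Finset {p : (L.Term (Fin n) × L.Term (Fin n)) × Bool // LitHolds p a})).Product fun i => (Af i).carrier)
  have hterm : ∀ t : L.Term (Fin n),
      t.realize e
        = (↑(fun i => t.realize (vf i)) : (U : Filter (Finset {p : (L.Term (Fin n) × L.Term (Fin n)) × Bool // LitHolds p a})).Product fun i => (Af i).carrier) := by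
    intro t
    show t.realize (fun j =>
        (↑(fun i => vf i j) : (U : Filter (Finset {p : (L.Term (Fin n) × L.Term (Fin n)) × Bool // LitHolds p a})).Product fun i => (Af i).carrier)) = _
    exact Ultraproduct.term_realize_cast (fun j i => vf i j) t
  -- terms have the same atomic type over `a` and over `e`
  have key : ∀ s t : L.Term (Fin n), s.realize a = t.realize a ↔ s.realize e = t.realize e := by
    intro s t
    constructor
    · intro h
      rw [hterm, hterm]
      refine Quotient.sound' ?_
      have hp : LitHolds ((s, t), true) a := by
        simpa [LitHolds, EqHolds] using h
      refine Filter.mem_of_superset (hU {⟨((s, t), true), hp⟩}) fun j hj => ?_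
      have := hvf j _ (Finset.singleton_subset_iff.1 hj)
      exact (by simpa [LitHolds, EqHolds] using this : s.realize (vf j) = t.realize (vf j))
    · intro h
      by_contra hne
      have hp : LitHolds ((s, t), false) a := by
        simpa [LitHolds, EqHolds] using hne
      have h1 : ∀ᶠ j in (U : Filter (Finset {p : (L.Term (Fin n) × L.Term (Fin n)) × Bool // LitHolds p a})), s.realize (vf j) = t.realize (vf j) := by
        rw [hterm, hterm] at h
        exact Quotient.exact' h
      have h2 : ∀ᶠ j in (U : Filter (Finset {p : (L.Term (Fin n) × L.Term (Fin n)) × Bool // LitHolds p a})), ¬(s.realize (vf j) = t.realize (vf j)) := by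
        refine Filter.mem_of_superset (hU {⟨((s, t), false), hp⟩}) fun j hj => ?_
        have := hvf j _ (Finset.singleton_subset_iff.1 hj)
        exact (by simpa [LitHolds, EqHolds] using this : ¬(s.realize (vf j) = t.realize (vf j)))
      obtain ⟨j, hj1, hj2⟩ := (h1.and h2).exists
      exact hj2 hj1
  -- the closure of the range of `e` is in `K`
  have memN' : Alg.mk (↥(closure L (Set.range e)) : Type u) ∈ K :=
    hK.2.1 _ hPK (closure L (Set.range e))
  -- isomorphism between the two finitely generated substructures
  have hsurjN : ∀ x : ↥(closure L (Set.range a)), ∃ t : L.Term (Fin n), t.realize a = ↑x :=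
    fun x => exists_term_of_mem_closure x.2
  choose tN htN using hsurjN
  let F : ↥(closure L (Set.range a)) → ↥(closure L (Set.range e)) := fun x =>
    ⟨(tN x).realize e, Term.realize_mem _ _ fun j => subset_closure (Set.mem_range_self j)⟩
  have hF : ∀ (t : L.Term (Fin n)) (x : ↥(closure L (Set.range a))), t.realize a = ↑x →
      ((F x : ↥(closure L (Set.range e)))
        : (U : Filter (Finset {p : (L.Term (Fin n) × L.Term (Fin n)) × Bool // LitHolds p a})).Product fun i => (Af i).carrier) = t.realize e := by
    intro t x hx
    exact ((key t (tN x)).1 (by rw [hx, htN x])).symm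
  have hFinj : Function.Injective F := by
    intro x y hxy
    have h1 : (tN x).realize e = (tN y).realize e := congrArg Subtype.val hxy
    have h2 := (key (tN x) (tN y)).2 h1
    exact Subtype.coe_injective ((htN x).symm.trans (h2.trans (htN y)))
  have hFsurj : Function.Surjective F := by
    intro y
    obtain ⟨t, ht⟩ := exists_term_of_mem_closure y.2
    refine ⟨⟨t.realize a, Term.realize_mem _ _ fun j => subset_closure (Set.mem_range_self j)⟩, ?_⟩
    exact Subtype.coe_injective ((hF t _ rfl).trans ht)
  let G : ↥(closure L (Set.range a)) ≃[L] ↥(closure L (Set.range e)) :=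
    { toEquiv := Equiv.ofBijective F ⟨hFinj, hFsurj⟩
      map_fun' := by
        intro k f x
        show F (funMap f x) = funMap f (F ∘ x)
        have hx : (Term.func f fun j => tN (x j)).realize a = ((funMap f x :
            ↥(closure L (Set.range a))) : B) := by
          have hcoe : ((funMap f x : ↥(closure L (Set.range a))) : B)
              = funMap f fun i => ((x i : ↥(closure L (Set.range a))) : B) := rfl
          rw [hcoe]
          show funMap f (fun j => (tN (x j)).realize a) = _
          exact congrArg (funMap f) (funext fun j => htN (x j))
        have h2 := hF _ _ hx
        exact Subtype.coe_injective (h2.trans (by rfl))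
      map_rel' := fun {k} r x => isEmptyElim r }
  exact hK.1 _ memN' _ ⟨G.symm⟩

end AuxClosure

section AuxMain

open Substructure BoundedFormula

set_option maxHeartbeats 1000000 in
/-- The key extraction: a quantifier-free formula equivalent, over all models of `T'`, to the
projection `∃ y φ(x̄, y)`. -/
theorem main_theta [L.IsAlgebraic] (hc : Nonempty L.Constants) {K : Set (Alg L)}
    (hK : IsUniversalClass K) {T' : L.Theory} (hcot : AreCotheories (theoryOf K) T')
    (hcompl : ∀ (M : Type u) [L.Structure M] [Nonempty M], M ⊨ theoryOf K →
      Theory.IsComplete ((L.lhomWithConstants M).onTheory T' ∪ diagram L M))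
    (n : ℕ) (φl : List (L.Term (Fin n ⊕ Unit) × L.Term (Fin n ⊕ Unit))) :
    ∃ θ : L.Formula (Fin n), θ.IsQF ∧
      ∀ (B : Type u) [L.Structure B] [Nonempty B], B ⊨ T' → ∀ a : Fin n → B,
        (θ.Realize a ↔ ∃ b : B, ConjHolds φl (Sum.elim a fun _ => b)) := by
  classical
  -- the projection formula
  let Phi : L.Formula (Fin n) :=
    Formula.iExs Unit (conjForm φl)
  have realize_Phi : ∀ (M : Type u) [L.Structure M] (w : Fin n → M),
      Phi.Realize w ↔ ∃ b : M, ConjHolds φl (Sum.elim w fun _ => b) := by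
    intro M _ w
    rw [Formula.realize_iExs]
    constructor
    · rintro ⟨i, hi⟩
      exact ⟨i (), realize_conjForm.1 hi⟩
    · rintro ⟨b, hb⟩
      exact ⟨fun _ => b, realize_conjForm.2 hb⟩
  -- the set of quantifier-free consequences of the projection over models of T'
  let Delta : Set (L.Formula (Fin n)) := {ψ | ψ.IsQF ∧
    ∀ (C : Type u) [L.Structure C] [Nonempty C], C ⊨ T' →
      ∀ w : Fin n → C, Phi.Realize w → ψ.Realize w}
  -- main claim: Delta entails the projection over models of T'
  have claim : ∀ (B : Type u) [L.Structure B] [Nonempty B], B ⊨ T' → ∀ a : Fin n → B,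
      (∀ ψ ∈ Delta, ψ.Realize a) → Phi.Realize a := by
    intro B iB iNB hB a hDa
    have hNK : Alg.mk (↥(closure L (Set.range a)) : Type u) ∈ K :=
      closure_mem_of_models hK hcot hB a
    haveI : Nonempty (↥(closure L (Set.range a)) : Type u) :=
      ⟨⟨((hc.some : L.Constants) : B), (closure L (Set.range a)).constants_mem _⟩⟩
    have hNmod : (↥(closure L (Set.range a)) : Type u) ⊨ theoryOf K :=
      (Theory.model_iff _).2 fun s hs => hs _ hNK
    have hcompN := hcompl (↥(closure L (Set.range a)) : Type u) hNmod
    let f : Fin n → (↥(closure L (Set.range a)) : Type u) := fun j =>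
      ⟨a j, subset_closure (Set.mem_range_self j)⟩
    let s0 : (L[[(↥(closure L (Set.range a)) : Type u)]]).Sentence :=
      Formula.equivSentence (Phi.relabel f)
    letI : (constantsOn (↥(closure L (Set.range a)) : Type u)).Structure B :=
      constantsOn.structure ((↑) : _ → B)
    have hBdiag : B ⊨ diagram L (↥(closure L (Set.range a)) : Type u) :=
      (Theory.model_iff _).2 (models_diagram_of_substructure _)
    have hBU : B ⊨ (L.lhomWithConstants (↥(closure L (Set.range a)) : Type u)).onTheory T' ∪
        diagram L (↥(closure L (Set.range a)) : Type u) :=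
      Theory.Model.union ((LHom.onTheory_model (M := B) _ T').2 hB) hBdiag
    rcases hcompN.2 s0 with hyes | hno
    · haveI := hBU
      have hs0 : B ⊨ s0 := hyes.realize_sentence B
      rw [show s0 = Formula.equivSentence (Phi.relabel f) from rfl,
        Formula.realize_equivSentence, Formula.realize_relabel] at hs0
      exact hs0
    · exfalso
      have hunsat : ¬((L.lhomWithConstants (↥(closure L (Set.range a)) : Type u)).onTheory T' ∪
          diagram L (↥(closure L (Set.range a)) : Type u) ∪ {s0}).IsSatisfiable :=
        not_isSatisfiable_union_not hno
      obtain ⟨T0, hT0sub, hT0unsat⟩ := exists_unsat_finset hunsat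
      let D0 : Finset ((L[[(↥(closure L (Set.range a)) : Type u)]]).Sentence) :=
        T0.filter fun s => s ∈ diagram L (↥(closure L (Set.range a)) : Type u)
      have hD0diag : ∀ δ ∈ D0, δ ∈ diagram L (↥(closure L (Set.range a)) : Type u) :=
        fun δ hδ => (Finset.mem_filter.1 hδ).2
      have hU0unsat : ¬((L.lhomWithConstants (↥(closure L (Set.range a)) : Type u)).onTheory T' ∪
          (↑D0 : (L[[(↥(closure L (Set.range a)) : Type u)]]).Theory) ∪ {s0}).IsSatisfiable := by
        intro hsat
        refine hT0unsat (hsat.mono ?_)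
        intro s hs
        rcases hT0sub hs with (h1 | h2) | h3
        · exact Set.mem_union_left _ (Set.mem_union_left _ h1)
        · exact Set.mem_union_left _ (Set.mem_union_right _
            (Finset.mem_coe.2 (Finset.mem_filter.2 ⟨hs, h2⟩)))
        · exact Set.mem_union_right _ h3
      -- terms representing the elements of the closure
      have htm0 : ∀ m : (↥(closure L (Set.range a)) : Type u),
          ∃ t : L.Term (Fin n), t.realize a = ↑m := fun m => exists_term_of_mem_closure m.2
      let tm : (↥(closure L (Set.range a)) : Type u) → L.Term (Fin n) := fun m =>
        if h : ∃ j, f j = m then Term.var h.choose else (htm0 m).choose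
      have tmSpec : ∀ m, (tm m).realize a = (↑m : B) := by
        intro m
        by_cases h : ∃ j, f j = m
        · show (if h' : ∃ j, f j = m then Term.var h'.choose else (htm0 m).choose).realize a = _
          rw [dif_pos h]
          have := h.choose_spec
          calc Term.realize a (Term.var h.choose) = a h.choose := rfl
          _ = ↑(f h.choose) := rfl
          _ = ↑m := by rw [this]
        · show (if h' : ∃ j, f j = m then Term.var h'.choose else (htm0 m).choose).realize a = _
          rw [dif_neg h]
          exact (htm0 m).choose_spec
      have tmVar : ∀ j : Fin n, ∃ j' : Fin n, a j' = a j ∧ tm (f j) = Term.var j' := by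
        intro j
        have h : ∃ j', f j' = f j := ⟨j, rfl⟩
        refine ⟨h.choose, congrArg Subtype.val h.choose_spec, ?_⟩
        show (if h' : ∃ j', f j' = f j then Term.var h'.choose else _) = Term.var h.choose
        rw [dif_pos h]
      -- the equality pairs among the parameters
      let eqL : List (L.Term (Fin n) × L.Term (Fin n)) :=
        (((List.finRange n).product (List.finRange n)).filter
          fun p => decide (a p.1 = a p.2)).map fun p => (Term.var p.1, Term.var p.2)
      -- the conjunction of the translated diagram sentences
      let chi : L.Formula (Fin n) := conjForm eqL ⊓ listInf (D0.toList.map fun δ =>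
        (Formula.equivSentence.symm δ).subst tm)
      have chiQF : chi.IsQF := by
        refine (conjForm_isQF _).inf (listInf_isQF _ fun ψ hψ => ?_)
        obtain ⟨δ, hδ, rfl⟩ := List.mem_map.1 hψ
        exact aux_isQF_subst (aux_isQF_equivSentence_symm
          (hD0diag δ (Finset.mem_toList.1 hδ)).1) tm
      -- chi.not belongs to Delta
      have hchiD : chi.not ∈ Delta := by
        refine ⟨chiQF.not, ?_⟩
        intro C iC iNC hC w hPhiw
        rw [Formula.realize_not]
        intro hchi
        obtain ⟨heq, hlist⟩ := Formula.realize_inf.1 hchi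
        letI : (constantsOn (↥(closure L (Set.range a)) : Type u)).Structure C :=
          constantsOn.structure fun m => (tm m).realize w
        have hCmod : C ⊨ (L.lhomWithConstants (↥(closure L (Set.range a)) : Type u)).onTheory T' ∪
            (↑D0 : (L[[(↥(closure L (Set.range a)) : Type u)]]).Theory) ∪ {s0} := by
          refine Theory.Model.union (Theory.Model.union ?_ ?_) ?_
          · exact (LHom.onTheory_model (M := C) _ T').2 hC
          · refine (Theory.model_iff _).2 fun δ hδ => ?_
            have hmemL : ((Formula.equivSentence.symm δ).subst tm : L.Formula (Fin n)) ∈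
                D0.toList.map (fun δ => (Formula.equivSentence.symm δ).subst tm) :=
              List.mem_map_of_mem (Finset.mem_toList.2 (Finset.mem_coe.1 hδ))
            have hrw := realize_listInf.1 hlist _ hmemL
            have h1 : (Formula.equivSentence.symm δ).Realize fun m => (tm m).realize w :=
              aux_realize_formula_subst.1 hrw
            rw [Formula.realize_equivSentence_symm] at h1
            exact h1
          · refine (Theory.model_iff _).2 fun s hs => ?_
            rw [Set.mem_singleton_iff.1 hs]
            have hsent : (Formula.equivSentence (Phi.relabel f)).Realize C ↔
                (Phi.relabel f).Realize fun m => ((L.con m : _) : C) :=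
              Formula.realize_equivSentence C _
            show (Formula.equivSentence (Phi.relabel f)).Realize C
            rw [hsent, Formula.realize_relabel]
            have hfw : ((fun m => ((L.con m : _) : C)) ∘ f) = w := by
              funext j
              show (tm (f j)).realize w = w j
              obtain ⟨j', hjj', htmj⟩ := tmVar j
              rw [htmj]
              show w j' = w j
              have hmem : ((Term.var j' : L.Term (Fin n)), (Term.var j : L.Term (Fin n))) ∈
                  eqL := by
                refine List.mem_map.2 ⟨(j', j), ?_, rfl⟩
                refine List.mem_filter.2 ⟨?_, by simpa using hjj'⟩
                exact List.pair_mem_product.2 ⟨List.mem_finRange _, List.mem_finRange _⟩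
              exact realize_conjForm.1 heq _ hmem
            rw [hfw]
            exact hPhiw
        haveI := hCmod
        exact hU0unsat ⟨⟨C⟩⟩
      -- but chi holds of `a` in B
      have hchiA : chi.Realize a := by
        refine Formula.realize_inf.2 ⟨?_, ?_⟩
        · refine realize_conjForm.2 fun p hp => ?_
          obtain ⟨q, hq, rfl⟩ := List.mem_map.1 hp
          have : a q.1 = a q.2 := by simpa using (List.mem_filter.1 hq).2
          exact this
        · refine realize_listInf.2 fun ψ hψ => ?_
          obtain ⟨δ, hδ, rfl⟩ := List.mem_map.1 hψ
          refine aux_realize_formula_subst.2 ?_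
          have heq2 : (fun m : (↥(closure L (Set.range a)) : Type u) => (tm m).realize a)
              = ((↑) : _ → B) := funext tmSpec
          rw [heq2, Formula.realize_equivSentence_symm]
          exact models_diagram_of_substructure _ δ (hD0diag δ (Finset.mem_toList.1 hδ))
      have := hDa chi.not hchiD
      rw [Formula.realize_not] at this
      exact this hchiA
  -- final compactness extraction over fresh constants
  let toSent : L.Formula (Fin n) → (L[[(ULift.{u} (Fin n) : Type u)]]).Sentence := fun ψ =>
    Formula.equivSentence (ψ.relabel fun j => (ULift.up j : ULift.{u} (Fin n)))
  have hWunsat : ¬((L.lhomWithConstants (ULift.{u} (Fin n))).onTheory T' ∪ (toSent '' Delta) ∪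
      {toSent Phi.not}).IsSatisfiable := by
    rintro ⟨Mo⟩
    letI : L.Structure Mo.Carrier := (L.lhomWithConstants (ULift.{u} (Fin n))).reduct Mo.Carrier
    haveI : Nonempty Mo.Carrier := Mo.nonempty'
    haveI : (L.lhomWithConstants (ULift.{u} (Fin n))).IsExpansionOn Mo.Carrier :=
      LHom.isExpansionOn_reduct _ _
    have hmod : Mo.Carrier ⊨ (L.lhomWithConstants (ULift.{u} (Fin n))).onTheory T' ∪
        (toSent '' Delta) ∪ {toSent Phi.not} := Mo.is_model
    have hT'B : Mo.Carrier ⊨ T' :=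
      (LHom.onTheory_model (M := Mo.Carrier) _ T').1
        (hmod.mono fun s hs => Set.mem_union_left _ (Set.mem_union_left _ hs))
    have hDa : ∀ ψ ∈ Delta, ψ.Realize fun j =>
        ((L.con (ULift.up j) : _) : Mo.Carrier) := by
      intro ψ hψ
      have h1 : Mo.Carrier ⊨ toSent ψ := (Theory.model_iff _).1 hmod _
        (Set.mem_union_left _ (Set.mem_union_right _ ⟨ψ, hψ, rfl⟩))
      rw [show toSent ψ = Formula.equivSentence (ψ.relabel fun j =>
        (ULift.up j : ULift.{u} (Fin n))) from rfl, Formula.realize_equivSentence,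
        Formula.realize_relabel] at h1
      exact h1
    have hnot : ¬Phi.Realize fun j => ((L.con (ULift.up j) : _) : Mo.Carrier) := by
      have h1 : Mo.Carrier ⊨ toSent Phi.not := (Theory.model_iff _).1 hmod _
        (Set.mem_union_right _ rfl)
      have h2 := (Formula.realize_equivSentence Mo.Carrier _).1 h1
      have h3 := Formula.realize_relabel.1 h2
      exact Formula.realize_not.1 h3
    exact hnot (claim Mo.Carrier hT'B _ hDa)
  obtain ⟨T0, hT0sub, hT0unsat⟩ := exists_unsat_finset hWunsat
  let S0 : Finset ((L[[(ULift.{u} (Fin n) : Type u)]]).Sentence) :=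
    T0.filter fun s => s ∈ toSent '' Delta
  have hchoose : ∀ s ∈ S0, ∃ ψ, ψ ∈ Delta ∧ toSent ψ = s := fun s hs =>
    (Finset.mem_filter.1 hs).2
  choose ψof hψofD hψofEq using hchoose
  refine ⟨listInf (S0.attach.toList.map fun s => ψof s.1 s.2), ?_, ?_⟩
  · refine listInf_isQF _ fun ψ hψ => ?_
    obtain ⟨s, _, rfl⟩ := List.mem_map.1 hψ
    exact (hψofD s.1 s.2).1
  · intro B iB iNB hB a
    constructor
    · intro hθ
      by_contra hnb
      letI : (constantsOn (ULift.{u} (Fin n))).Structure B :=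
        constantsOn.structure fun r => a r.down
      have hBT0 : B ⊨ (↑T0 : (L[[(ULift.{u} (Fin n) : Type u)]]).Theory) := by
        refine (Theory.model_iff _).2 fun s hs => ?_
        rcases hT0sub hs with (h1 | h2) | h3
        · exact (Theory.model_iff _).1 ((LHom.onTheory_model (M := B) _ T').2 hB) _ h1
        · have hsS0 : s ∈ S0 := Finset.mem_filter.2 ⟨hs, h2⟩
          have hre : (ψof s hsS0).Realize a := by
            refine realize_listInf.1 hθ _ ?_
            exact List.mem_map.2 ⟨⟨s, hsS0⟩, Finset.mem_toList.2 (Finset.mem_attach _ _), rfl⟩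
          rw [← hψofEq s hsS0]
          rw [show toSent (ψof s hsS0) = Formula.equivSentence ((ψof s hsS0).relabel fun j =>
            (ULift.up j : ULift.{u} (Fin n))) from rfl]
          rw [show ((Formula.equivSentence ((ψof s hsS0).relabel fun j =>
            (ULift.up j : ULift.{u} (Fin n)))).Realize B) = ((ψof s hsS0).relabel (fun j =>
            (ULift.up j : ULift.{u} (Fin n)))).Realize (fun r =>
              ((L.con r : _) : B)) from propext (Formula.realize_equivSentence B _)]
          rw [Formula.realize_relabel]
          exact hre
        · rw [Set.mem_singleton_iff.1 h3]
          rw [show toSent Phi.not = Formula.equivSentence ((Phi.not).relabel fun j =>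
            (ULift.up j : ULift.{u} (Fin n))) from rfl]
          rw [show ((Formula.equivSentence ((Phi.not).relabel fun j =>
            (ULift.up j : ULift.{u} (Fin n)))).Realize B) = ((Phi.not).relabel (fun j =>
            (ULift.up j : ULift.{u} (Fin n)))).Realize (fun r =>
              ((L.con r : _) : B)) from propext (Formula.realize_equivSentence B _)]
          rw [Formula.realize_relabel, Formula.realize_not]
          intro hPhi
          exact hnb ((realize_Phi B a).1 hPhi)
      haveI := hBT0
      exact hT0unsat ⟨⟨B⟩⟩
    · intro hb
      refine realize_listInf.2 fun ψ hψ => ?_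
      obtain ⟨s, _, rfl⟩ := List.mem_map.1 hψ
      exact (hψofD s.1 s.2).2 B hB a ((realize_Phi B a).2 hb)

end AuxMain

/-- Proposition 3.7. Let `K` be a universal class of algebras over an algebraic
first-order language `L`. If the first-order theory of `K` has a model completion, then `K` has
the variable projection property. -/
theorem varProj_of_hasModelCompletion
    (L : FirstOrder.Language.{u, u}) [L.IsAlgebraic] (hc : Nonempty L.Constants)
    (K : Set (Alg L)) (hK : IsUniversalClass K) :
    HasModelCompletion K → VarProj K := by
  rintro ⟨T', ⟨⟨_, hcot⟩, hcompl⟩⟩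
  intro n φl
  obtain ⟨θ, hQF, hθ⟩ := main_theta hc hK hcot hcompl n φl
  refine ⟨θ, hQF, ?_, ?_⟩
  · -- K ⊨ φ → θ
    intro A hA v hv
    obtain ⟨B, hBne, hBT, ⟨g⟩⟩ := exists_extension_model hc hcompl hA
    haveI := hBne
    have h1 : ConjHolds φl (⇑g ∘ v) := by
      intro ε hε
      have h0 := hv ε hε
      show ε.1.realize (⇑g ∘ v) = ε.2.realize (⇑g ∘ v)
      rw [HomClass.realize_term, HomClass.realize_term]
      exact congrArg g h0
    have h2 : ∃ b : B.carrier, ConjHolds φl (Sum.elim (⇑g ∘ v ∘ Sum.inl) fun _ => b) := by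
      refine ⟨g (v (Sum.inr ())), ?_⟩
      have heq : (Sum.elim (⇑g ∘ v ∘ Sum.inl) fun _ => g (v (Sum.inr ()))) = ⇑g ∘ v := by
        funext x
        cases x with
        | inl j => rfl
        | inr u => rfl
      rw [heq]
      exact h1
    have h3 := (hθ B.carrier hBT (⇑g ∘ v ∘ Sum.inl)).2 h2
    exact (aux_realize_embedding_qf_formula g hQF).1 h3
  · -- conservativity
    intro ε hε A hA v hθv
    obtain ⟨B, hBne, hBT, ⟨g⟩⟩ := exists_extension_model hc hcompl hA
    haveI := hBne
    have h3 : θ.Realize (⇑g ∘ v) := (aux_realize_embedding_qf_formula g hQF).2 hθv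
    obtain ⟨b, hb⟩ := (hθ B.carrier hBT (⇑g ∘ v)).1 h3
    -- the universal implication transfers to B
    have himpK : ∀ A' ∈ K, ∀ w : Fin n ⊕ Unit → A'.carrier,
        ((conjForm φl).imp ((ε.1.relabel Sum.inl).equal (ε.2.relabel Sum.inl))).Realize w := by
      intro A' hA' w
      rw [Formula.realize_imp]
      intro hconj
      have h0 := hε A' hA' w (realize_conjForm.1 hconj)
      rw [Formula.realize_equal, Term.realize_relabel, Term.realize_relabel]
      exact h0
    have himpB := entails_cotheory_univ hcot
      (((conjForm_isQF φl).imp (BoundedFormula.IsQF.of_isAtomic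
        (BoundedFormula.IsAtomic.equal _ _)))) himpK B.carrier hBT
      (Sum.elim (⇑g ∘ v) fun _ => b)
    rw [Formula.realize_imp] at himpB
    have h4 := himpB (realize_conjForm.2 hb)
    have h5 : EqHolds ε (⇑g ∘ v) := by
      have h6 := Formula.realize_equal.1 h4
      rw [Term.realize_relabel, Term.realize_relabel] at h6
      exact h6
    show ε.1.realize v = ε.2.realize v
    apply g.injective
    rw [← HomClass.realize_term g (t := ε.1) (v := v), ← HomClass.realize_term g (t := ε.2)]
    exact h5

end Paper
end
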